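/- arXiv:1603.03145 — 9 statements merged into one kernel-verified Lean document; each statement's English description precedes it below -/
import Mathlib

section
/- There exists a bi-Lipschitz homeomorphism h of ℝ² (i.e., a homeomorphism for which there is L > 0 with (1/L)‖x − y‖ ≤ ‖h(x) − h(y)‖ ≤ L‖x − y‖ for all x, y ∈ ℝ²) that maps the logarithmic spiral {e^{−at}(cos t, sin t) : t ∈ [0,∞)} ∪ {(0,0)} (for a given constant a > 0) onto the straight segment {(t, 0) : 0 ≤ t ≤ 1}. -/
open Filter

noncomputable section

/-- The point `(x, y)` in the Euclidean plane. -/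
def V2 (x y : ℝ) : EuclideanSpace ℝ (Fin 2) := (WithLp.equiv 2 (Fin 2 → ℝ)).symm ![x, y]

/-- The spiral `C_φ = {φ(t)(cos t, sin t) : t ≥ 0} ∪ {0}`. -/
def spiral (φ : ℝ → ℝ) : Set (EuclideanSpace ℝ (Fin 2)) :=
  {p | ∃ t : ℝ, 0 ≤ t ∧ p = φ t • V2 (Real.cos t) (Real.sin t)} ∪ {0}

/-- `h` is bi-Lipschitz with constant `L`. -/
def BiLip {d : ℕ} (L : ℝ) (h : EuclideanSpace ℝ (Fin d) → EuclideanSpace ℝ (Fin d)) : Prop :=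
  ∀ x y, (1 / L) * ‖x - y‖ ≤ ‖h x - h y‖ ∧ ‖h x - h y‖ ≤ L * ‖x - y‖

lemma abs_exp_I_sub_one (t : ℝ) : ‖Complex.exp (t * Complex.I) - 1‖ ≤ |t| := by
  have hre : (Complex.exp (t * Complex.I) - 1).re = Real.cos t - 1 := by
    simp [Complex.exp_ofReal_mul_I_re]
  have him : (Complex.exp (t * Complex.I) - 1).im = Real.sin t := by
    simp [Complex.exp_ofReal_mul_I_im]
  rw [Complex.norm_def, Complex.normSq_apply, hre, him]
  have hc := Real.one_sub_sq_div_two_le_cos (x := t)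
  have hsq : (Real.cos t - 1) * (Real.cos t - 1) + Real.sin t * Real.sin t ≤ t ^ 2 := by
    have := Real.sin_sq_add_cos_sq t
    nlinarith [Real.cos_le_one t]
  calc Real.sqrt ((Real.cos t - 1) * (Real.cos t - 1) + Real.sin t * Real.sin t)
      ≤ Real.sqrt (t ^ 2) := Real.sqrt_le_sqrt hsq
    _ = |t| := Real.sqrt_sq_eq_abs t

/-- The unwinding map on `ℂ` with twist rate `s`. -/
def F (s : ℝ) (z : ℂ) : ℂ := z * Complex.exp ((s * Real.log (‖z‖) : ℝ) * Complex.I)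

lemma abs_F' (s : ℝ) (z : ℂ) :
    ‖z * Complex.exp ((s * Real.log (‖z‖) : ℝ) * Complex.I)‖
      = ‖z‖ := by
  rw [norm_mul, Complex.norm_exp_ofReal_mul_I, mul_one]

lemma abs_F (s : ℝ) (z : ℂ) : ‖F s z‖ = ‖z‖ := abs_F' s z

lemma lip_aux (s : ℝ) (z w : ℂ) (h : ‖w‖ ≤ ‖z‖) :
    ‖F s z - F s w‖ ≤ (1 + |s|) * ‖z - w‖ := by
  by_cases hw : w = 0
  · subst hw
    simp only [F, map_zero, mul_zero, Complex.exp_zero, mul_one, zero_mul,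
      sub_zero]
    calc ‖z * Complex.exp ((s * Real.log (‖z‖) : ℝ) * Complex.I)‖
        = ‖z‖ := abs_F s z
      _ ≤ (1 + |s|) * ‖z‖ := by nlinarith [abs_nonneg s, norm_nonneg z]
  · have haw : 0 < ‖w‖ := norm_pos_iff.mpr hw
    have haz : 0 < ‖z‖ := lt_of_lt_of_le haw h
    set A := Complex.exp ((s * Real.log (‖z‖) : ℝ) * Complex.I) with hA
    set B := Complex.exp ((s * Real.log (‖w‖) : ℝ) * Complex.I) with hB
    have habsA : ‖A‖ = 1 := Complex.norm_exp_ofReal_mul_I _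
    have habsB : ‖B‖ = 1 := Complex.norm_exp_ofReal_mul_I _
    have hsplit : F s z - F s w = (z - w) * A + w * (A - B) := by
      simp only [F, ← hA, ← hB]; ring
    have hAB : A - B = B * (Complex.exp ((s * (Real.log (‖z‖) - Real.log (‖w‖)) : ℝ) * Complex.I) - 1) := by
      rw [mul_sub, mul_one, hA, hB, ← Complex.exp_add]
      congr 1
      push_cast
      ring
    have hlog : Real.log (‖z‖) - Real.log (‖w‖)
        ≤ (‖z‖ - ‖w‖) / ‖w‖ := by
      have h1 : Real.log (‖z‖ / ‖w‖) ≤ ‖z‖ / ‖w‖ - 1 :=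
        Real.log_le_sub_one_of_pos (by positivity)
      rw [Real.log_div haz.ne' haw.ne'] at h1
      have : ‖z‖ / ‖w‖ - 1 = (‖z‖ - ‖w‖) / ‖w‖ := by
        field_simp
      linarith [this ▸ h1]
    have hlognn : 0 ≤ Real.log (‖z‖) - Real.log (‖w‖) := by
      have := Real.log_le_log haw h
      linarith
    have habsAB : ‖A - B‖ ≤ |s| * ((‖z‖ - ‖w‖) / ‖w‖) := by
      rw [hAB, norm_mul, habsB, one_mul]
      calc ‖Complex.exp ((s * (Real.log (‖z‖) - Real.log (‖w‖)) : ℝ) * Complex.I) - 1‖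
          ≤ |s * (Real.log (‖z‖) - Real.log (‖w‖))| := abs_exp_I_sub_one _
        _ = |s| * (Real.log (‖z‖) - Real.log (‖w‖)) := by
            rw [abs_mul, _root_.abs_of_nonneg hlognn]
        _ ≤ |s| * ((‖z‖ - ‖w‖) / ‖w‖) := by
            exact mul_le_mul_of_nonneg_left hlog (abs_nonneg s)
    have hdiff : ‖z‖ - ‖w‖ ≤ ‖z - w‖ := by
      have := norm_add_le (z - w) w
      simp only [sub_add_cancel] at this
      linarith
    calc ‖F s z - F s w‖
        = ‖(z - w) * A + w * (A - B)‖ := by rw [hsplit]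
      _ ≤ ‖(z - w) * A‖ + ‖w * (A - B)‖ := norm_add_le _ _
      _ = ‖z - w‖ + ‖w‖ * ‖A - B‖ := by
          rw [norm_mul, norm_mul, habsA, mul_one]
      _ ≤ ‖z - w‖ + ‖w‖ * (|s| * ((‖z‖ - ‖w‖) / ‖w‖)) := by
          nlinarith [norm_nonneg w]
      _ = ‖z - w‖ + |s| * (‖z‖ - ‖w‖) := by
          field_simp
      _ ≤ ‖z - w‖ + |s| * ‖z - w‖ := by
          nlinarith [abs_nonneg s]
      _ = (1 + |s|) * ‖z - w‖ := by ring

lemma lip (s : ℝ) (z w : ℂ) :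
    ‖F s z - F s w‖ ≤ (1 + |s|) * ‖z - w‖ := by
  rcases le_total (‖w‖) (‖z‖) with h | h
  · exact lip_aux s z w h
  · have := lip_aux s w z h
    rwa [← norm_neg, neg_sub, ← norm_neg (w - z), neg_sub] at this

lemma F_inv (s : ℝ) (z : ℂ) : F (-s) (F s z) = z := by
  simp only [F, abs_F']
  rw [mul_assoc, ← Complex.exp_add]
  have : ((s * Real.log (‖z‖) : ℝ) : ℂ) * Complex.I
      + ((-s * Real.log (‖z‖) : ℝ) : ℂ) * Complex.I = 0 := by
    push_cast; ring
  rw [this, Complex.exp_zero, mul_one]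

def toE (z : ℂ) : EuclideanSpace ℝ (Fin 2) := V2 z.re z.im

def toC (p : EuclideanSpace ℝ (Fin 2)) : ℂ := ⟨p 0, p 1⟩

lemma V2_zero (x y : ℝ) : V2 x y 0 = x := by simp [V2]
lemma V2_one (x y : ℝ) : V2 x y 1 = y := by simp [V2]

lemma toC_toE (z : ℂ) : toC (toE z) = z := by
  simp [toC, toE, V2_zero, V2_one]

lemma toE_toC (p : EuclideanSpace ℝ (Fin 2)) : toE (toC p) = p := by
  refine PiLp.ext fun i => ?_
  fin_cases i <;> simp [toE, toC, V2_zero, V2_one]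

lemma norm_toC (p : EuclideanSpace ℝ (Fin 2)) : ‖toC p‖ = ‖p‖ := by
  rw [EuclideanSpace.norm_eq, Complex.norm_def, Complex.normSq_mk]
  simp [Fin.sum_univ_two, sq_abs, toC]
  ring_nf

lemma toC_sub (p q : EuclideanSpace ℝ (Fin 2)) : toC (p - q) = toC p - toC q := by
  apply Complex.ext <;> simp [toC]

lemma abs_toC_sub (p q : EuclideanSpace ℝ (Fin 2)) :
    ‖toC p - toC q‖ = ‖p - q‖ := by
  rw [← toC_sub, norm_toC]

lemma toC_smul_V2 (r x y : ℝ) : toC (r • V2 x y) = (r : ℂ) * ⟨x, y⟩ := by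
  apply Complex.ext <;> simp [toC, V2_zero, V2_one, V2]

lemma toE_ofReal (r : ℝ) : toE (r : ℂ) = V2 r 0 := by
  simp [toE]

lemma F_spiral (a t : ℝ) (ha : 0 < a) :
    F (1/a) (toC (Real.exp (-a*t) • V2 (Real.cos t) (Real.sin t)))
      = (Real.exp (-a*t) : ℂ) := by
  have h1 : toC (Real.exp (-a*t) • V2 (Real.cos t) (Real.sin t))
      = (Real.exp (-a*t) : ℂ) * Complex.exp (t * Complex.I) := by
    rw [toC_smul_V2]
    congr 1
    apply Complex.ext
    · simp [Complex.exp_ofReal_mul_I_re]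
    · simp [Complex.exp_ofReal_mul_I_im]
  have h2 : ‖(Real.exp (-a*t) : ℂ) * Complex.exp (t * Complex.I)‖
      = Real.exp (-a*t) := by
    rw [norm_mul, Complex.norm_exp_ofReal_mul_I, mul_one, Complex.norm_real, Real.norm_eq_abs,
      abs_of_pos (Real.exp_pos _)]
  rw [h1, F, h2, Real.log_exp]
  have h3 : (1/a * (-a*t) : ℝ) = -t := by field_simp
  rw [h3, mul_assoc, ← Complex.exp_add]
  have h4 : (t : ℂ) * Complex.I + ((-t : ℝ) : ℂ) * Complex.I = 0 := by push_cast; ring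
  rw [h4, Complex.exp_zero, mul_one]

/-- There is a bi-Lipschitz homeomorphism of the plane mapping the logarithmic spiral
onto the segment `{(t,0) : 0 ≤ t ≤ 1}`. -/
theorem unwinding_logarithmic_spiral (a : ℝ) (ha : 0 < a) :
    ∃ h : EuclideanSpace ℝ (Fin 2) → EuclideanSpace ℝ (Fin 2),
      Function.Surjective h ∧ (∃ L > 0, BiLip L h) ∧
      h '' spiral (fun t => Real.exp (-a * t)) =
        {p | ∃ t : ℝ, 0 ≤ t ∧ t ≤ 1 ∧ p = V2 t 0} := by
  set s : ℝ := 1/a with hs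
  have hs0 : 0 < s := by positivity
  refine ⟨fun p => toE (F s (toC p)), ?_, ⟨1 + s, by positivity, ?_⟩, ?_⟩
  · intro q
    refine ⟨toE (F (-s) (toC q)), ?_⟩
    show toE (F s (toC (toE (F (-s) (toC q))))) = q
    rw [toC_toE]
    have : F s (F (-s) (toC q)) = toC q := by
      have := F_inv (-s) (toC q)
      rwa [neg_neg] at this
    rw [this, toE_toC]
  · intro x y
    have habs : |s| = s := abs_of_pos hs0
    have hupper : ‖toE (F s (toC x)) - toE (F s (toC y))‖ ≤ (1 + s) * ‖x - y‖ := by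
      calc ‖toE (F s (toC x)) - toE (F s (toC y))‖
          = ‖toC (toE (F s (toC x))) - toC (toE (F s (toC y)))‖ := by
            rw [abs_toC_sub]
        _ = ‖F s (toC x) - F s (toC y)‖ := by rw [toC_toE, toC_toE]
        _ ≤ (1 + |s|) * ‖toC x - toC y‖ := lip s _ _
        _ = (1 + s) * ‖x - y‖ := by rw [habs, abs_toC_sub]
    have hlower : ‖x - y‖ ≤ (1 + s) * ‖toE (F s (toC x)) - toE (F s (toC y))‖ := by
      calc ‖x - y‖ = ‖toC x - toC y‖ := (abs_toC_sub x y).symm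
        _ = ‖F (-s) (F s (toC x)) - F (-s) (F s (toC y))‖ := by
            rw [F_inv, F_inv]
        _ ≤ (1 + |(-s)|) * ‖F s (toC x) - F s (toC y)‖ := lip (-s) _ _
        _ = (1 + s) * ‖toE (F s (toC x)) - toE (F s (toC y))‖ := by
            rw [abs_neg, habs]
            congr 1
            calc ‖F s (toC x) - F s (toC y)‖
                = ‖toC (toE (F s (toC x))) - toC (toE (F s (toC y)))‖ := by
                  rw [toC_toE, toC_toE]
              _ = ‖toE (F s (toC x)) - toE (F s (toC y))‖ := abs_toC_sub _ _
    constructor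
    · rw [div_mul_eq_mul_div, div_le_iff₀ (by positivity)]
      linarith
    · exact hupper
  · ext q
    simp only [Set.mem_image, Set.mem_setOf_eq]
    constructor
    · rintro ⟨p, hp, rfl⟩
      rcases hp with ⟨t, ht, rfl⟩ | hp0
      · rw [F_spiral a t ha, toE_ofReal]
        refine ⟨Real.exp (-a*t), (Real.exp_pos _).le, ?_, rfl⟩
        apply Real.exp_le_one_iff.mpr  -- check name
        nlinarith
      · simp only [Set.mem_singleton_iff] at hp0
        subst hp0
        refine ⟨0, le_refl 0, zero_le_one, ?_⟩
        have h0 : toC (0 : EuclideanSpace ℝ (Fin 2)) = 0 := by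
          apply Complex.ext <;> simp [toC]
        rw [h0]
        simp only [F, map_zero, zero_mul]
        rw [toE]
        norm_num
    · rintro ⟨t, ht0, ht1, rfl⟩
      rcases eq_or_lt_of_le ht0 with h0 | h0
      · refine ⟨0, Or.inr rfl, ?_⟩
        have h0' : toC (0 : EuclideanSpace ℝ (Fin 2)) = 0 := by
          apply Complex.ext <;> simp [toC]
        rw [h0']
        simp only [F, map_zero, zero_mul]
        rw [← h0, toE]
        norm_num
      · set u : ℝ := -Real.log t / a with hu
        have hu0 : 0 ≤ u := by
          have : Real.log t ≤ 0 := Real.log_nonpos ht0 ht1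
          exact div_nonneg (neg_nonneg.2 this) ha.le
        have heq : Real.exp (-a*u) = t := by
          rw [hu]
          have : -a * (-Real.log t / a) = Real.log t := by field_simp
          rw [this, Real.exp_log h0]
        refine ⟨Real.exp (-a*u) • V2 (Real.cos u) (Real.sin u), Or.inl ⟨u, hu0, rfl⟩, ?_⟩
        rw [F_spiral a u ha, toE_ofReal, heq]
end
end

section
/- Let φ : [0,∞) → (0,1] be continuous, monotonically decreasing to zero, and of sub-exponential decay, i.e., log(φ(n))/n → 0 as n → ∞. Then for every bi-Lipschitz homeomorphism h : ℝ² → ℝ², the set of asymptotic directions of the image h(C_φ) at the point h(0,0) is all of the unit circle S¹; in particular, h(C_φ) is not an unwinded curve. -/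
open Filter

noncomputable section

/-- The set of asymptotic directions of `A` at `o`. -/
def asymDirs {d : ℕ} (A : Set (EuclideanSpace ℝ (Fin d))) (o : EuclideanSpace ℝ (Fin d)) :
    Set (EuclideanSpace ℝ (Fin d)) :=
  {u | ‖u‖ = 1 ∧ ∃ a : ℕ → EuclideanSpace ℝ (Fin d), (∀ n, a n ∈ A) ∧ (∀ n, a n ≠ o) ∧
    Tendsto a atTop (nhds o) ∧
    Tendsto (fun n => ‖a n - o‖⁻¹ • (a n - o)) atTop (nhds u)}

/-- The cone at `o` over the set of asymptotic directions of `A` at `o`. -/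
def cone {d : ℕ} (A : Set (EuclideanSpace ℝ (Fin d))) (o : EuclideanSpace ℝ (Fin d)) :
    Set (EuclideanSpace ℝ (Fin d)) :=
  {x | ∃ t : ℝ, 0 ≤ t ∧ ∃ u ∈ asymDirs A o, x = t • u}

lemma norm_V2 (a b : ℝ) : ‖V2 a b‖ = Real.sqrt (a^2 + b^2) := by
  rw [EuclideanSpace.norm_eq]
  simp [Fin.sum_univ_two, sq_abs]
  rfl


lemma subexp_step (φ : ℝ → ℝ) (hpos : ∀ t ∈ Set.Ici (0:ℝ), 0 < φ t)
    (hle : ∀ t ∈ Set.Ici (0:ℝ), φ t ≤ 1)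
    (hanti : AntitoneOn φ (Set.Ici 0))
    (hsub : Tendsto (fun n : ℕ => Real.log (φ n) / n) atTop (nhds 0))
    (ε : ℝ) (hε : 0 < ε) (T : ℝ) (hT : 0 ≤ T) :
    ∃ t, T ≤ t ∧ φ t - φ (t + 2*Real.pi) ≤ ε * φ t := by
  by_contra hcon
  push_neg at hcon
  have hπ : (0:ℝ) < Real.pi := Real.pi_pos
  -- the negation: ∀ t ≥ T, φ (t+2π) < (1-ε) φ t
  have hstep : ∀ t, T ≤ t → φ (t + 2*Real.pi) < (1-ε) * φ t := by
    intro t ht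
    have := hcon t ht
    nlinarith [this]
  set c := 1 - ε with hc
  have hφT : 0 < φ T := hpos T hT
  have hφT2 : 0 < φ (T + 2*Real.pi) := hpos _ (Set.mem_Ici.mpr (by nlinarith))
  have hc0 : 0 < c := by nlinarith [hstep T le_rfl]
  have hc1 : c < 1 := by simp [hc]; linarith
  have hck : ∀ k : ℕ, φ (T + 2*Real.pi*k) ≤ c ^ k := by
    intro k
    induction k with
    | zero => simpa using hle T hT
    | succ k ih =>
      have h1 : T ≤ T + 2*Real.pi*k := by nlinarith [Nat.cast_nonneg (α := ℝ) k]
      have h2 := hstep _ h1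
      have : T + 2*Real.pi*k + 2*Real.pi = T + 2*Real.pi*(k+1 : ℕ) := by push_cast; ring
      rw [this] at h2
      calc φ (T + 2*Real.pi*(k+1:ℕ)) ≤ c * φ (T + 2*Real.pi*k) := h2.le
        _ ≤ c * c ^ k := by nlinarith [pow_pos hc0 k]
        _ = c ^ (k+1) := by ring
  set N : ℕ → ℕ := fun n => ⌈T + 2*Real.pi*n⌉₊ with hN
  have hNge : ∀ n : ℕ, (T + 2*Real.pi*n : ℝ) ≤ N n := fun n => Nat.le_ceil _
  have hNgen : ∀ n : ℕ, n ≤ N n := by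
    intro n
    have : (n:ℝ) ≤ N n := by
      have := hNge n
      nlinarith [Real.pi_gt_three, (Nat.cast_nonneg n : (0:ℝ) ≤ n)]
    exact_mod_cast this
  have hNtend : Tendsto N atTop atTop := tendsto_atTop_mono hNgen tendsto_id
  have hφN : ∀ n : ℕ, φ (N n) ≤ c ^ n := by
    intro n
    refine le_trans (hanti ?_ ?_ (hNge n)) (hck n)
    · exact Set.mem_Ici.mpr (by positivity)
    · exact Set.mem_Ici.mpr (Nat.cast_nonneg _)
  have hlogc : Real.log c < 0 := Real.log_neg hc0 hc1
  have hev1 : ∀ᶠ n : ℕ in atTop, Real.log c / 8 < Real.log (φ (N n)) / (N n) := by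
    have := (hsub.comp hNtend).eventually (eventually_gt_nhds (show Real.log c / 8 < 0 by linarith))
    exact this
  have hev2 : ∀ᶠ n : ℕ in atTop, Real.log (φ (N n)) / (N n) ≤ Real.log c / 8 := by
    filter_upwards [eventually_ge_atTop (⌈T⌉₊ + 1)] with n hn
    have hn1 : 1 ≤ n := le_trans (Nat.le_add_left 1 _) hn
    have hTn : T + 1 ≤ (n:ℝ) := by
      have h1 : T ≤ (⌈T⌉₊ : ℝ) := Nat.le_ceil T
      have h2 : ((⌈T⌉₊ + 1 : ℕ) : ℝ) ≤ n := Nat.cast_le.mpr hn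
      push_cast at h2; linarith
    have hNpos : (0:ℝ) < N n := by
      have := hNge n
      nlinarith [(Nat.one_le_cast.mpr hn1 : (1:ℝ) ≤ (n:ℝ))]
    have hN8 : (N n : ℝ) ≤ 8 * n := by
      have h1 : (N n : ℝ) < T + 2*Real.pi*n + 1 := Nat.ceil_lt_add_one (by positivity)
      have h2 : (1:ℝ) ≤ n := Nat.one_le_cast.mpr hn1
      nlinarith [Real.pi_lt_d2]
    have hlog : Real.log (φ (N n)) ≤ n * Real.log c := by
      have h1 : 0 < φ (N n) := hpos _ (Set.mem_Ici.mpr (Nat.cast_nonneg _))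
      calc Real.log (φ (N n)) ≤ Real.log (c ^ n) := Real.log_le_log h1 (hφN n)
        _ = (n:ℝ) * Real.log c := by rw [Real.log_pow]
    have hnum : (n:ℝ) * Real.log c ≤ 0 := by
      have : (0:ℝ) ≤ n := Nat.cast_nonneg _
      nlinarith
    calc Real.log (φ (N n)) / (N n) ≤ (n * Real.log c) / (N n) := by gcongr
      _ ≤ (n * Real.log c) / (8 * n) := by
          rw [div_le_div_iff₀ hNpos (by positivity)]
          nlinarith
      _ = Real.log c / 8 := by
          field_simp
  obtain ⟨n, h1, h2⟩ := (hev1.and hev2).exists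
  exact absurd (lt_of_lt_of_le h1 h2) (lt_irrefl _)

set_option maxHeartbeats 2000000 in
/-- Main theorem: if `φ` decreases to zero sub-exponentially, then the image of the spiral
`C_φ` under any bi-Lipschitz homeomorphism of the plane has every unit vector as an asymptotic
direction at the image of the origin; in particular the image is not an unwinded curve. -/
theorem no_unwinding (φ : ℝ → ℝ) (hcont : ContinuousOn φ (Set.Ici 0))
    (hpos : ∀ t ∈ Set.Ici (0 : ℝ), 0 < φ t) (hle : ∀ t ∈ Set.Ici (0 : ℝ), φ t ≤ 1)
    (hanti : AntitoneOn φ (Set.Ici 0)) (hlim : Tendsto φ atTop (nhds 0))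
    (hsub : Tendsto (fun n : ℕ => Real.log (φ n) / n) atTop (nhds 0))
    (h : EuclideanSpace ℝ (Fin 2) → EuclideanSpace ℝ (Fin 2))
    (hsurj : Function.Surjective h) (L : ℝ) (hL : 0 < L) (hbl : BiLip L h) :
    asymDirs (h '' spiral φ) (h 0) = {u : EuclideanSpace ℝ (Fin 2) | ‖u‖ = 1} := by
  have hπ : (0:ℝ) < Real.pi := Real.pi_pos
  have hL1 : 1 ≤ L := by
    have h1 := (hbl (V2 1 0) 0).1
    have h2 := (hbl (V2 1 0) 0).2
    have hn : ‖V2 1 0 - 0‖ = 1 := by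
      rw [sub_zero, norm_V2]; norm_num
    rw [hn] at h1 h2
    have h3 : 1/L ≤ L := by have := h1.trans h2; linarith
    rw [div_le_iff₀ hL] at h3
    nlinarith
  have hinj : Function.Injective h := by
    intro x y hxy
    have h1 := (hbl x y).1
    rw [hxy, sub_self, norm_zero] at h1
    rw [one_div_mul_eq_div, div_nonpos_iff] at h1
    have : ‖x - y‖ ≤ 0 := by
      rcases h1 with h1 | h1
      · linarith
      · linarith [h1.2]
    have := le_antisymm this (norm_nonneg _)
    rwa [norm_sub_eq_zero_iff] at this
  set g := Function.invFun h with hgdef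
  have hgr : ∀ y, h (g y) = y := fun y => Function.rightInverse_invFun hsurj y
  have hgl : ∀ x, g (h x) = x := fun x => Function.leftInverse_invFun hinj x
  have hglip : ∀ a b, ‖g a - g b‖ ≤ L * ‖a - b‖ := by
    intro a b
    have h1 := (hbl (g a) (g b)).1
    rw [hgr, hgr, one_div_mul_eq_div, div_le_iff₀ hL] at h1
    linarith
  have hgcont : Continuous g := by
    rw [Metric.continuous_iff]
    intro b ε hε
    refine ⟨ε / L, by positivity, fun a ha => ?_⟩
    rw [dist_eq_norm] at ha ⊢
    calc ‖g a - g b‖ ≤ L * ‖a - b‖ := hglip a b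
      _ < L * (ε / L) := by exact (mul_lt_mul_iff_right₀ hL).mpr ha
      _ = ε := by field_simp
  ext u
  simp only [Set.mem_setOf_eq]
  constructor
  · exact fun hu => hu.1
  · intro hu
    refine ⟨hu, ?_⟩
    have master : ∀ n : ℕ, ∃ a, a ∈ h '' spiral φ ∧ a ≠ h 0 ∧
        ‖a - h 0‖ ≤ (L+1) * φ n ∧ ‖‖a - h 0‖⁻¹ • (a - h 0) - u‖ ≤ 2 / (n+1) := by
      intro n
      have hεpos : (0:ℝ) < 1/(2*L^2*(n+1)) := by positivity
      obtain ⟨t, htn, hgap⟩ := subexp_step φ hpos hle hanti hsub _ hεpos n (Nat.cast_nonneg n)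
      have ht0 : (0:ℝ) ≤ t := le_trans (Nat.cast_nonneg n) htn
      set r := φ t with hrdef
      have hrpos : 0 < r := hpos t (Set.mem_Ici.mpr ht0)
      -- intermediate value theorem to find s with ‖g (h 0 + s • u)‖ = r
      have hFcont : Continuous (fun s : ℝ => ‖g (h 0 + s • u)‖) := by
        apply Continuous.norm
        exact hgcont.comp (continuous_const.add (continuous_id.smul continuous_const))
      have hF0 : ‖g (h 0 + (0:ℝ) • u)‖ = 0 := by
        rw [zero_smul, add_zero, hgl 0, norm_zero]
      have hFL : r ≤ ‖g (h 0 + (L*r) • u)‖ := by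
        have h2 := (hbl (g (h 0 + (L*r) • u)) 0).2
        rw [hgr] at h2
        have hnu : ‖h 0 + (L*r) • u - h 0‖ = L * r := by
          rw [add_sub_cancel_left, norm_smul, hu, Real.norm_of_nonneg (by positivity), mul_one]
        rw [hnu, sub_zero] at h2
        nlinarith
      have hIcc : r ∈ Set.Icc (‖g (h 0 + (0:ℝ) • u)‖) (‖g (h 0 + (L*r) • u)‖) := by
        rw [hF0]; exact ⟨hrpos.le, hFL⟩
      obtain ⟨s, hsIcc, hFs⟩ := intermediate_value_Icc (by positivity : (0:ℝ) ≤ L*r)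
        hFcont.continuousOn hIcc
      set q := g (h 0 + s • u) with hqdef
      have hq : h q = h 0 + s • u := hgr _
      have hqnorm : ‖q‖ = r := hFs
      have hs0 : 0 ≤ s := hsIcc.1
      have hsLr : s ≤ L * r := hsIcc.2
      have hhq0 : ‖h q - h 0‖ = s := by
        rw [hq, add_sub_cancel_left, norm_smul, hu, Real.norm_of_nonneg hs0, mul_one]
      clear hqdef
      clear_value q
      have hslb : r / L ≤ s := by
        have h1 := (hbl q 0).1
        rw [sub_zero, hqnorm] at h1
        have h0 : h (0 : EuclideanSpace ℝ (Fin 2)) = h 0 := rfl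
        rw [hhq0] at h1
        rw [div_le_iff₀ hL]
        rw [one_div_mul_eq_div, div_le_iff₀ hL] at h1
        linarith
      have hspos : 0 < s := lt_of_lt_of_le (by positivity) hslb
      -- polar coordinates for q
      have hq2 : (q 0)^2 + (q 1)^2 = r^2 := by
        have hne := EuclideanSpace.norm_eq q
        rw [hqnorm] at hne
        have h2 : Real.sqrt ((q 0)^2 + (q 1)^2) = r := by
          rw [← hne.symm] at *
          rw [Fin.sum_univ_two] at hne
          simpa [sq_abs] using hne.symm
        nlinarith [Real.sq_sqrt (show (0:ℝ) ≤ (q 0)^2 + (q 1)^2 by positivity), h2]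
      set z : ℂ := ⟨q 0, q 1⟩ with hzdef
      have habs : ‖z‖ = r := by
        rw [Complex.norm_def, Complex.normSq_mk]
        rw [show q 0 * q 0 + q 1 * q 1 = (q 0)^2 + (q 1)^2 by ring, hq2]
        exact Real.sqrt_sq hrpos.le
      set θ0 := Complex.arg z with hθ0def
      have hx : r * Real.cos θ0 = q 0 := by
        rw [← habs]; exact Complex.norm_mul_cos_arg z
      have hy : r * Real.sin θ0 = q 1 := by
        rw [← habs]; exact Complex.norm_mul_sin_arg z
      clear hθ0def hzdef habs
      clear_value θ0 z
      clear z hq2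
      set k : ℤ := ⌈(t - θ0)/(2*Real.pi)⌉ with hkdef
      set θ : ℝ := θ0 + k*(2*Real.pi) with hθdef
      have hθt : t ≤ θ := by
        have h1 : (t - θ0)/(2*Real.pi) ≤ (k:ℝ) := Int.le_ceil _
        rw [div_le_iff₀ (by positivity)] at h1
        simp only [hθdef]; linarith
      have hθup : θ ≤ t + 2*Real.pi := by
        have h1 : (k:ℝ) < (t - θ0)/(2*Real.pi) + 1 := Int.ceil_lt_add_one _
        have h2 : ((t - θ0)/(2*Real.pi)) * (2*Real.pi) = t - θ0 :=
          div_mul_cancel₀ _ (by positivity : (0:ℝ) < 2*Real.pi).ne'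
        have h3 := mul_lt_mul_of_pos_right h1 (by positivity : (0:ℝ) < 2*Real.pi)
        rw [add_mul, h2, one_mul] at h3
        simp only [hθdef]
        linarith
      have hθ0' : (0:ℝ) ≤ θ := le_trans ht0 hθt
      have hcosθ : Real.cos θ = Real.cos θ0 := Real.cos_add_int_mul_two_pi θ0 k
      have hsinθ : Real.sin θ = Real.sin θ0 := Real.sin_add_int_mul_two_pi θ0 k
      clear hkdef hθdef
      clear_value θ k
      clear k
      have hq_eq : q = r • V2 (Real.cos θ) (Real.sin θ) := by
        rw [hcosθ, hsinθ]
        ext i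
        fin_cases i
        · show q 0 = (r • V2 (Real.cos θ0) (Real.sin θ0)) 0
          rw [PiLp.smul_apply]
          show q 0 = r • Real.cos θ0
          rw [smul_eq_mul, hx]
        · show q 1 = (r • V2 (Real.cos θ0) (Real.sin θ0)) 1
          rw [PiLp.smul_apply]
          show q 1 = r • Real.sin θ0
          rw [smul_eq_mul, hy]
      set c := φ θ • V2 (Real.cos θ) (Real.sin θ) with hcdef
      have hc_mem : c ∈ spiral φ := Or.inl ⟨θ, hθ0', rfl⟩
      have hcq : ‖q - c‖ = |r - φ θ| * ‖V2 (Real.cos θ) (Real.sin θ)‖ := by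
        rw [hq_eq, hcdef, ← sub_smul, norm_smul, Real.norm_eq_abs]
      have hφθ1 : φ θ ≤ r := hanti (Set.mem_Ici.mpr ht0) (Set.mem_Ici.mpr hθ0') hθt
      have hφθ2 : φ (t + 2*Real.pi) ≤ φ θ :=
        hanti (Set.mem_Ici.mpr hθ0') (Set.mem_Ici.mpr (by positivity)) hθup
      have hVnorm : ‖V2 (Real.cos θ) (Real.sin θ)‖ = 1 := by
        rw [norm_V2, Real.cos_sq_add_sin_sq, Real.sqrt_one]
      have hqc : ‖q - c‖ ≤ r * (1/(2*L^2*(n+1))) := by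
        rw [hcq, hVnorm, mul_one, abs_of_nonneg (by linarith)]
        calc r - φ θ ≤ r - φ (t + 2*Real.pi) := by linarith
          _ ≤ (1/(2*L^2*(n+1))) * r := hgap
          _ = r * (1/(2*L^2*(n+1))) := by ring
      clear hcq hq_eq hx hy
      -- the point a := h c
      have hD : ‖h c - (h 0 + s • u)‖ ≤ r/(2*L*(n+1)) := by
        have h2 := (hbl c q).2
        rw [hq] at h2
        calc ‖h c - (h 0 + s • u)‖ ≤ L * ‖c - q‖ := h2
          _ = L * ‖q - c‖ := by rw [norm_sub_rev]
          _ ≤ L * (r * (1/(2*L^2*(n+1)))) := mul_le_mul_of_nonneg_left hqc hL.le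
          _ = r/(2*L*(n+1)) := by field_simp
      have hDs : r/(2*L*(n+1)) ≤ s/(2*(n+1)) := by
        rw [div_le_div_iff₀ (by positivity) (by positivity)]
        have hr : r ≤ L * s := by
          rw [div_le_iff₀ hL] at hslb; linarith
        nlinarith [Nat.cast_nonneg (α := ℝ) n]
      have hDs2 : r/(2*L*(n+1)) ≤ s/2 := by
        refine hDs.trans ?_
        rw [div_le_div_iff₀ (by positivity) (by norm_num)]
        nlinarith [Nat.cast_nonneg (α := ℝ) n]
      have hbnd : ‖(h c - h 0) - s • u‖ ≤ r/(2*L*(n+1)) := by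
        have he : (h c - h 0) - s • u = h c - (h 0 + s • u) := by abel
        rw [he]; exact hD
      have hsu_norm : ‖s • u‖ = s := by
        rw [norm_smul, hu, Real.norm_of_nonneg hs0, mul_one]
      have hblow : s/2 ≤ ‖h c - h 0‖ := by
        have h1 : ‖s • u‖ - ‖h c - h 0‖ ≤ ‖s • u - (h c - h 0)‖ := norm_sub_norm_le _ _
        have h2 : ‖s • u - (h c - h 0)‖ = ‖h c - h 0 - s • u‖ := norm_sub_rev _ _
        rw [h2, hsu_norm] at h1
        linarith [hbnd, hDs2]
      have hbpos : 0 < ‖h c - h 0‖ := lt_of_lt_of_le (by positivity) hblow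
      refine ⟨h c, ⟨c, hc_mem, rfl⟩, ?_, ?_, ?_⟩
      · intro hEq
        rw [hEq, sub_self, norm_zero] at hbpos
        exact lt_irrefl 0 hbpos
      · have hsplit : h c - h 0 = ((h c - h 0) - s • u) + s • u := by abel
        calc ‖h c - h 0‖ = ‖((h c - h 0) - s • u) + s • u‖ := by rw [← hsplit]
          _ ≤ ‖(h c - h 0) - s • u‖ + ‖s • u‖ := norm_add_le _ _
          _ ≤ r/(2*L*(n+1)) + s := by rw [hsu_norm]; linarith
          _ ≤ r + L * r := by
              have hr2 : r/(2*L*(n+1)) ≤ r := by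
                rw [div_le_iff₀ (by positivity)]
                nlinarith [Nat.cast_nonneg (α := ℝ) n]
              linarith
          _ = (L+1) * r := by ring
          _ ≤ (L+1) * φ n := by
              have hrφ : r ≤ φ n := hanti (Set.mem_Ici.mpr (Nat.cast_nonneg n))
                (Set.mem_Ici.mpr ht0) htn
              nlinarith
      · have key : ‖h c - h 0‖⁻¹ • (h c - h 0) - u
            = ‖h c - h 0‖⁻¹ • ((h c - h 0) - ‖h c - h 0‖ • u) := by
          rw [smul_sub (‖h c - h 0‖⁻¹) (h c - h 0) (‖h c - h 0‖ • u), smul_smul,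
            inv_mul_cancel₀ (ne_of_gt hbpos), one_smul]
        rw [key, norm_smul, Real.norm_of_nonneg (by positivity)]
        have h1 : ‖(h c - h 0) - ‖h c - h 0‖ • u‖ ≤ 2 * (r/(2*L*(n+1))) := by
          have h2 : ‖(h c - h 0) - ‖h c - h 0‖ • u‖
              ≤ ‖(h c - h 0) - s • u‖ + ‖s • u - ‖h c - h 0‖ • u‖ := by
            have he : (h c - h 0) - ‖h c - h 0‖ • u
                = ((h c - h 0) - s • u) + (s • u - ‖h c - h 0‖ • u) := by abel
            rw [he]; exact norm_add_le _ _
          have h3 : ‖s • u - ‖h c - h 0‖ • u‖ = |s - ‖h c - h 0‖| := by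
            rw [← sub_smul, norm_smul, hu, mul_one]; rfl
          have h4 : |s - ‖h c - h 0‖| ≤ r/(2*L*(n+1)) := by
            have h5 := abs_norm_sub_norm_le (s • u) (h c - h 0)
            rw [hsu_norm, norm_sub_rev (s • u) (h c - h 0)] at h5
            exact h5.trans hbnd
          linarith
        calc ‖h c - h 0‖⁻¹ * ‖(h c - h 0) - ‖h c - h 0‖ • u‖
            ≤ (s/2)⁻¹ * (2 * (r/(2*L*(n+1)))) := by
              apply mul_le_mul ?_ h1 (norm_nonneg _) (by positivity)
              exact inv_anti₀ (by positivity) hblow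
          _ ≤ (s/2)⁻¹ * (2 * (s/(2*(n+1)))) := by
              apply mul_le_mul_of_nonneg_left ?_ (by positivity)
              linarith [hDs]
          _ = 2/(n+1) := by
              have hs' : s ≠ 0 := ne_of_gt hspos
              push_cast
              field_simp
    choose a ha hane hbound hdir using master
    have hφn : Tendsto (fun n : ℕ => φ n) atTop (nhds 0) :=
      hlim.comp tendsto_natCast_atTop_atTop
    refine ⟨a, ha, hane, ?_, ?_⟩
    · rw [tendsto_iff_norm_sub_tendsto_zero]
      refine squeeze_zero (fun n => norm_nonneg _) hbound ?_
      have := hφn.const_mul (L+1)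
      simpa using this
    · have h2n : Tendsto (fun n : ℕ => 2 / ((n:ℝ)+1)) atTop (nhds 0) := by
        have h0 := tendsto_one_div_add_atTop_nhds_zero_nat (𝕜 := ℝ)
        have h2 := h0.const_mul 2
        simpa [div_eq_mul_inv, mul_comm] using h2
      rw [tendsto_iff_norm_sub_tendsto_zero]
      exact squeeze_zero (fun n => norm_nonneg _) hdir h2n
end
end

section
/- Let h : ℝ² → ℝ² be a bi-Lipschitz homeomorphism and let φ : [0,∞) → (0,1] be a function monotonically decreasing to zero with sub-exponential decay (log(φ(n))/n → 0). Then there exists a bi-Lipschitz homeomorphism h̄ of ℝ² with the same bi-Lipschitz constant as h such that h̄(S¹) ⊆ LD(h(C_φ)), where LD(h(C_φ)) is the cone over the set of asymptotic directions of h(C_φ) at the point h(0,0). -/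
open Filter

noncomputable section

namespace CircleIntoConeAux

open Real

abbrev E2 := EuclideanSpace ℝ (Fin 2)

lemma V2_eq (u : E2) : V2 (u 0) (u 1) = u := by
  ext i; fin_cases i <;> simp [V2]

lemma exists_angle (u : E2) (hu : ‖u‖ = 1) :
    ∃ θ : ℝ, 0 ≤ θ ∧ θ ≤ 2 * π ∧ Real.cos θ = u 0 ∧ Real.sin θ = u 1 := by
  have h2 : (u 0)^2 + (u 1)^2 = 1 := by
    have h2 : Real.sqrt (∑ i, ‖u i‖^2) = 1 := (EuclideanSpace.norm_eq u) ▸ hu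
    rw [Real.sqrt_eq_one] at h2
    simpa [Fin.sum_univ_two, sq_abs] using h2
  set z : ℂ := ⟨u 0, u 1⟩ with hz
  have hzne : z ≠ 0 := by
    intro h0
    rw [Complex.ext_iff] at h0
    simp [hz] at h0
    rw [h0.1, h0.2] at h2; norm_num at h2
  have habs : ‖z‖ = 1 := by
    rw [Complex.norm_def, Complex.normSq_apply]
    simp only [hz]
    rw [← sq, ← sq] at *
    rw [h2]; simp
  have hcos : Real.cos z.arg = u 0 := by rw [Complex.cos_arg hzne, habs]; simp [hz]
  have hsin : Real.sin z.arg = u 1 := by rw [Complex.sin_arg, habs]; simp [hz]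
  rcases le_or_gt 0 z.arg with hge | hlt
  · exact ⟨z.arg, hge, le_trans (Complex.arg_le_pi z) (by linarith [Real.pi_pos]), hcos, hsin⟩
  · refine ⟨z.arg + 2 * π, ?_, ?_, ?_, ?_⟩
    · linarith [Complex.neg_pi_lt_arg z, Real.pi_pos]
    · linarith [Complex.arg_le_pi z, Real.pi_pos]
    · rw [Real.cos_add_two_pi]; exact hcos
    · rw [Real.sin_add_two_pi]; exact hsin

lemma exists_ratio (φ : ℝ → ℝ)
    (hpos : ∀ t ∈ Set.Ici (0 : ℝ), 0 < φ t)
    (hanti : AntitoneOn φ (Set.Ici 0))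
    (hsub : Tendsto (fun n : ℕ => Real.log (φ n) / n) atTop (nhds 0)) :
    ∀ ε > (0:ℝ), ∀ N : ℕ, ∃ k : ℕ, N ≤ k ∧ φ (2*π*k) < (1+ε) * φ (2*π*k + 2*π) := by
  intro ε hε N
  by_contra hcon
  push_neg at hcon
  set c := Real.log (1+ε) with hc
  have hcpos : 0 < c := Real.log_pos (by linarith)
  set C := Real.log (φ (2*π*N)) with hC
  have pi_pos := Real.pi_pos
  have key : ∀ n : ℕ, Real.log (φ (2*π*((N:ℝ)+n))) ≤ C - n * c := by
    intro n
    induction n with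
    | zero => simp [hC]
    | succ n ih =>
      have hk := hcon (N + n) (Nat.le_add_right _ _)
      push_cast at hk
      have h1 : (2:ℝ)*π*((N:ℝ)+n) + 2*π = 2*π*((N:ℝ)+(n+1)) := by ring
      have hp1 : 0 < φ (2*π*((N:ℝ)+n) + 2*π) :=
        hpos _ (Set.mem_Ici.mpr (by positivity))
      have hp2 : 0 < φ (2*π*((N:ℝ)+n)) := hpos _ (Set.mem_Ici.mpr (by positivity))
      have hlog := Real.log_le_log (mul_pos (by linarith) hp1) hk
      rw [Real.log_mul (by linarith) (ne_of_gt hp1)] at hlog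
      rw [← hc] at hlog
      push_cast
      rw [← h1]
      linarith
  have h1 : Tendsto (fun n : ℕ => 7*(N+n)) atTop atTop :=
    tendsto_atTop_mono (fun n => by simp only [id]; omega) tendsto_id
  have h7 : Tendsto (fun n : ℕ => Real.log (φ (7*((N:ℝ)+n))) / (7*((N:ℝ)+n))) atTop (nhds 0) := by
    have := hsub.comp h1
    simp only [Function.comp_def] at this
    push_cast at this
    exact this
  have hev1 : ∀ᶠ n : ℕ in atTop, -((c:ℝ)/14) < Real.log (φ (7*((N:ℝ)+n))) / (7*((N:ℝ)+n)) := by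
    have hm : Set.Ioi (-((c:ℝ)/14)) ∈ nhds (0:ℝ) := Ioi_mem_nhds (by linarith)
    exact h7.eventually (eventually_of_mem hm (fun x hx => hx))
  have hev2 : ∀ᶠ n : ℕ in atTop, (2*C/c + (N:ℝ)) ≤ n ∧ 1 ≤ n := by
    obtain ⟨M, hM⟩ := exists_nat_ge (2*C/c + (N:ℝ))
    filter_upwards [eventually_ge_atTop M, eventually_ge_atTop 1] with n hn h2
    exact ⟨le_trans hM (by exact_mod_cast hn), h2⟩
  obtain ⟨n, hlt, hbig, hge1⟩ := (hev1.and hev2).exists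
  have hle1 : (2:ℝ)*π*((N:ℝ)+n) ≤ 7*((N:ℝ)+n) := by
    have hpp : π < 3.15 := Real.pi_lt_d2
    have hNn : (0:ℝ) ≤ (N:ℝ)+n := by positivity
    nlinarith
  have hmono : φ (7*((N:ℝ)+n)) ≤ φ (2*π*((N:ℝ)+n)) :=
    hanti (Set.mem_Ici.mpr (by positivity)) (Set.mem_Ici.mpr (by positivity)) hle1
  have hp3 : 0 < φ (7*((N:ℝ)+n)) := hpos _ (Set.mem_Ici.mpr (by positivity))
  have hchain : Real.log (φ (7*((N:ℝ)+n))) ≤ C - n * c := by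
    have := Real.log_le_log hp3 hmono
    linarith [key n]
  have hden : (0:ℝ) < 7*((N:ℝ)+n) := by
    have : (1:ℝ) ≤ n := by exact_mod_cast hge1
    positivity
  have hfinal : Real.log (φ (7*((N:ℝ)+n))) / (7*((N:ℝ)+n)) ≤ -(c/14) := by
    rw [div_le_iff₀ hden]
    have h2 : 2*C ≤ c * ((n:ℝ) - N) := by
      rw [div_add' _ _ _ (ne_of_gt hcpos), div_le_iff₀ hcpos] at hbig
      nlinarith
    nlinarith
  linarith

lemma exists_ulim (𝒰 : Ultrafilter ℕ) (f : ℕ → E2) (R : ℝ) (hf : ∀ n, ‖f n‖ ≤ R) :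
    ∃ z : E2, Tendsto f 𝒰 (nhds z) := by
  have hc : IsCompact (Metric.closedBall (0 : E2) R) := isCompact_closedBall _ _
  have hle : ↑(𝒰.map f) ≤ Filter.principal (Metric.closedBall (0 : E2) R) := by
    rw [Ultrafilter.coe_map, le_principal_iff, mem_map]
    refine univ_mem' (fun n => ?_)
    simpa [Metric.mem_closedBall, dist_zero_right] using hf n
  obtain ⟨z, _, hz⟩ := hc.ultrafilter_le_nhds (𝒰.map f) hle
  exact ⟨z, hz⟩

end CircleIntoConeAux

open CircleIntoConeAux Real

/-- For `φ` decreasing to zero sub-exponentially and `h` a bi-Lipschitz homeomorphism of the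
plane, there is a bi-Lipschitz homeomorphism `h̄` with the same bi-Lipschitz constant mapping
the unit circle into the cone over the asymptotic directions of `h(C_φ)` at `h(0)`. -/
theorem circle_into_cone (φ : ℝ → ℝ) (hcont : ContinuousOn φ (Set.Ici 0))
    (hpos : ∀ t ∈ Set.Ici (0 : ℝ), 0 < φ t) (hle : ∀ t ∈ Set.Ici (0 : ℝ), φ t ≤ 1)
    (hanti : AntitoneOn φ (Set.Ici 0)) (hlim : Tendsto φ atTop (nhds 0))
    (hsub : Tendsto (fun n : ℕ => Real.log (φ n) / n) atTop (nhds 0))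
    (h : EuclideanSpace ℝ (Fin 2) → EuclideanSpace ℝ (Fin 2))
    (hsurj : Function.Surjective h) (L : ℝ) (hL : 0 < L) (hbl : BiLip L h) :
    ∃ hbar : EuclideanSpace ℝ (Fin 2) → EuclideanSpace ℝ (Fin 2),
      Function.Surjective hbar ∧ BiLip L hbar ∧
      hbar '' {u : EuclideanSpace ℝ (Fin 2) | ‖u‖ = 1} ⊆ cone (h '' spiral φ) (h 0) := by
  classical
  have pi_pos := Real.pi_pos
  -- choose scales with ratio close to 1
  have hkex : ∀ n : ℕ, ∃ m : ℕ, n ≤ m ∧ φ (2*π*m) < (1 + 1/((n:ℝ)+1)) * φ (2*π*m + 2*π) :=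
    fun n => exists_ratio φ hpos hanti hsub (1/((n:ℝ)+1)) (by positivity) n
  choose k hk1 hk2 using hkex
  set r : ℕ → ℝ := fun n => φ (2*π*(k n)) with hr
  have hrpos : ∀ n, 0 < r n := fun n => hpos _ (Set.mem_Ici.mpr (by positivity))
  have hrlim : Tendsto r atTop (nhds 0) := by
    have h1 : Tendsto (fun n : ℕ => ((k n : ℝ))) atTop atTop :=
      tendsto_natCast_atTop_atTop.comp (tendsto_atTop_mono hk1 tendsto_id)
    have h2 : Tendsto (fun n : ℕ => 2*π*(k n : ℝ)) atTop atTop :=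
      Tendsto.const_mul_atTop (by positivity) h1
    exact hlim.comp h2
  set g : ℕ → E2 → E2 := fun n x => (r n)⁻¹ • (h (r n • x) - h 0) with hg
  have hgdiff : ∀ n (x y : E2), ‖g n x - g n y‖ = (r n)⁻¹ * ‖h (r n • x) - h (r n • y)‖ := by
    intro n x y
    have he : g n x - g n y = (r n)⁻¹ • (h (r n • x) - h (r n • y)) := by
      simp only [hg, ← smul_sub]
      congr 1
      abel
    rw [he, norm_smul, Real.norm_eq_abs, abs_of_pos (inv_pos.mpr (hrpos n))]
  have hsmulnorm : ∀ n (x y : E2), ‖r n • x - r n • y‖ = r n * ‖x - y‖ := by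
    intro n x y
    rw [← smul_sub, norm_smul, Real.norm_eq_abs, abs_of_pos (hrpos n)]
  have hgup : ∀ n (x y : E2), ‖g n x - g n y‖ ≤ L * ‖x - y‖ := by
    intro n x y
    rw [hgdiff]
    have h2 := (hbl (r n • x) (r n • y)).2
    rw [hsmulnorm n x y] at h2
    have h3 := mul_le_mul_of_nonneg_left h2 (le_of_lt (inv_pos.mpr (hrpos n)))
    calc (r n)⁻¹ * ‖h (r n • x) - h (r n • y)‖ ≤ (r n)⁻¹ * (L * (r n * ‖x - y‖)) := h3
      _ = L * ‖x - y‖ := by field_simp [(hrpos n).ne']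
  have hglow : ∀ n (x y : E2), (1/L) * ‖x - y‖ ≤ ‖g n x - g n y‖ := by
    intro n x y
    rw [hgdiff]
    have h2 := (hbl (r n • x) (r n • y)).1
    rw [hsmulnorm n x y] at h2
    have h3 := mul_le_mul_of_nonneg_left h2 (le_of_lt (inv_pos.mpr (hrpos n)))
    calc (1/L) * ‖x - y‖ = (r n)⁻¹ * (1/L * (r n * ‖x - y‖)) := by
          field_simp [(hrpos n).ne']
      _ ≤ (r n)⁻¹ * ‖h (r n • x) - h (r n • y)‖ := h3
  have hg0 : ∀ n, g n 0 = 0 := by intro n; simp [hg]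
  set 𝒰 : Ultrafilter ℕ := Ultrafilter.of atTop with hUdef
  have hU : (𝒰 : Filter ℕ) ≤ atTop := Ultrafilter.of_le _
  have hgb : ∀ (x : E2) (n : ℕ), ‖g n x‖ ≤ L * ‖x‖ := by
    intro x n
    have := hgup n x 0
    simpa [hg0 n] using this
  have hex : ∀ x : E2, ∃ z, Tendsto (fun n => g n x) 𝒰 (nhds z) :=
    fun x => exists_ulim 𝒰 _ (L*‖x‖) (hgb x)
  choose hbar hbt using hex
  have hbar0 : hbar 0 = 0 :=
    tendsto_nhds_unique (hbt 0) (by simpa [hg0] using (tendsto_const_nhds : Tendsto (fun _ : ℕ => (0:E2)) 𝒰 (nhds 0)))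
  have hbarbl : BiLip L hbar := by
    intro x y
    have t1 : Tendsto (fun n => ‖g n x - g n y‖) 𝒰 (nhds ‖hbar x - hbar y‖) :=
      ((hbt x).sub (hbt y)).norm
    exact ⟨ge_of_tendsto t1 (Eventually.of_forall fun n => hglow n x y),
      le_of_tendsto t1 (Eventually.of_forall fun n => hgup n x y)⟩
  have hbarsurj : Function.Surjective hbar := by
    intro y
    have hz : ∀ n, ∃ z : E2, h z = h 0 + r n • y := fun n => hsurj _
    choose z hzeq using hz
    set xs : ℕ → E2 := fun n => (r n)⁻¹ • z n with hxs
    have hrz : ∀ n, r n • ((r n)⁻¹ • z n) = z n := by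
      intro n
      rw [smul_smul, mul_inv_cancel₀ (ne_of_gt (hrpos n)), one_smul]
    have hgxs : ∀ n, g n (xs n) = y := by
      intro n
      simp only [hg, hxs, hrz n, hzeq n]
      rw [add_sub_cancel_left, smul_smul, inv_mul_cancel₀ (ne_of_gt (hrpos n)), one_smul]
    have hxb : ∀ n, ‖xs n‖ ≤ L * ‖y‖ := by
      intro n
      have hlow := (hbl (z n) 0).1
      rw [hzeq n, add_sub_cancel_left, sub_zero, norm_smul, Real.norm_eq_abs,
        abs_of_pos (hrpos n)] at hlow
      have hzb : ‖z n‖ ≤ L * (r n * ‖y‖) := by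
        rw [div_mul_eq_mul_div, div_le_iff₀ hL] at hlow
        calc ‖z n‖ = 1 * ‖z n‖ := (one_mul _).symm
          _ ≤ L * (r n * ‖y‖) := by nlinarith
      have : ‖xs n‖ = (r n)⁻¹ * ‖z n‖ := by
        rw [hxs]; rw [norm_smul, Real.norm_eq_abs, abs_of_pos (inv_pos.mpr (hrpos n))]
      rw [this]
      calc (r n)⁻¹ * ‖z n‖ ≤ (r n)⁻¹ * (L * (r n * ‖y‖)) :=
            mul_le_mul_of_nonneg_left hzb (le_of_lt (inv_pos.mpr (hrpos n)))
        _ = L * ‖y‖ := by field_simp [(hrpos n).ne']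
    obtain ⟨x, hx⟩ := exists_ulim 𝒰 xs (L*‖y‖) hxb
    refine ⟨x, ?_⟩
    have hdiff : Tendsto (fun n => ‖g n x - y‖) 𝒰 (nhds 0) := by
      have hb : ∀ n, ‖g n x - y‖ ≤ L * ‖x - xs n‖ := by
        intro n
        have := hgup n x (xs n)
        rwa [hgxs n] at this
      have ht : Tendsto (fun n => L * ‖x - xs n‖) 𝒰 (nhds 0) := by
        have h1 : Tendsto (fun n => x - xs n) 𝒰 (nhds 0) := by
          have := (tendsto_const_nhds : Tendsto (fun _ : ℕ => x) 𝒰 (nhds x)).sub hx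
          rwa [sub_self] at this
        have := (h1.norm.const_mul L)
        simpa using this
      exact squeeze_zero (fun n => norm_nonneg _) hb ht
    exact tendsto_nhds_unique (hbt x) (tendsto_iff_norm_sub_tendsto_zero.mpr hdiff)
  refine ⟨hbar, hbarsurj, hbarbl, ?_⟩
  rintro p ⟨u, hu, rfl⟩
  have hu : ‖u‖ = 1 := hu
  obtain ⟨θ, hθ0, hθ2, hcosθ, hsinθ⟩ := exists_angle u hu
  set s : ℕ → ℝ := fun n => φ (θ + 2*π*(k n)) with hs
  have hspos : ∀ n, 0 < s n := fun n => hpos _ (Set.mem_Ici.mpr (by positivity))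
  have hsler : ∀ n, s n ≤ r n := fun n =>
    hanti (Set.mem_Ici.mpr (by positivity)) (Set.mem_Ici.mpr (by positivity)) (by linarith)
  have hslow : ∀ n, φ (2*π*(k n) + 2*π) ≤ s n := fun n =>
    hanti (Set.mem_Ici.mpr (by positivity)) (Set.mem_Ici.mpr (by positivity)) (by linarith)
  have hratio : ∀ n, r n < (1 + 1/((n:ℝ)+1)) * s n := by
    intro n
    calc r n < (1 + 1/((n:ℝ)+1)) * φ (2*π*(k n) + 2*π) := hk2 n
      _ ≤ (1 + 1/((n:ℝ)+1)) * s n :=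
          mul_le_mul_of_nonneg_left (hslow n) (by positivity)
  have hsr1 : Tendsto (fun n => s n / r n) atTop (nhds 1) := by
    have hlo : ∀ n : ℕ, (1 + 1/((n:ℝ)+1))⁻¹ ≤ s n / r n := by
      intro n
      have hd : (0:ℝ) < 1 + 1/((n:ℝ)+1) := by positivity
      rw [le_div_iff₀ (hrpos n)]
      have h2 := mul_le_mul_of_nonneg_left (le_of_lt (hratio n)) (le_of_lt (inv_pos.mpr hd))
      calc (1 + 1/((n:ℝ)+1))⁻¹ * r n ≤ (1 + 1/((n:ℝ)+1))⁻¹ * ((1 + 1/((n:ℝ)+1)) * s n) := h2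
        _ = s n := by field_simp
    have hhi : ∀ n : ℕ, s n / r n ≤ 1 := fun n => (div_le_one (hrpos n)).mpr (hsler n)
    have hone : Tendsto (fun n : ℕ => 1 + 1/((n:ℝ)+1)) atTop (nhds 1) := by
      have := (tendsto_const_nhds : Tendsto (fun _ : ℕ => (1:ℝ)) atTop (nhds 1)).add
        tendsto_one_div_add_atTop_nhds_zero_nat
      simpa using this
    have hinv : Tendsto (fun n : ℕ => (1 + 1/((n:ℝ)+1))⁻¹) atTop (nhds 1) := by
      have := hone.inv₀ one_ne_zero
      simpa using this
    exact tendsto_of_tendsto_of_tendsto_of_le_of_le hinv tendsto_const_nhds hlo hhi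
  set a : ℕ → E2 := fun n => h (s n • u) with ha
  have hamem : ∀ n, a n ∈ h '' spiral φ := by
    intro n
    refine ⟨s n • u, Or.inl ⟨θ + 2*π*(k n), ?_, ?_⟩, rfl⟩
    · have h0' : (0:ℝ) ≤ 2*π*(k n) := by positivity
      linarith
    have e1 : θ + 2*π*((k n : ℕ) : ℝ) = θ + ((k n : ℕ) : ℝ) * (2*π) := by ring
    rw [e1, Real.cos_add_nat_mul_two_pi, Real.sin_add_nat_mul_two_pi, hcosθ, hsinθ, V2_eq]
    rw [hs]
    simp only [e1]
  have hsnorm : ∀ n, ‖s n • u - 0‖ = s n := by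
    intro n
    rw [sub_zero, norm_smul, Real.norm_eq_abs, abs_of_pos (hspos n), hu, mul_one]
  have hane : ∀ n, a n ≠ h 0 := by
    intro n heq
    have hlow := (hbl (s n • u) 0).1
    rw [hsnorm n] at hlow
    rw [ha] at heq
    simp only at heq
    rw [heq, sub_self, norm_zero] at hlow
    have : 0 < 1 / L * s n := mul_pos (by positivity) (hspos n)
    linarith
  have hanorm : ∀ n, ‖a n - h 0‖ ≤ L * s n := by
    intro n
    have := (hbl (s n • u) 0).2
    rw [hsnorm n] at this
    exact this
  have halim : Tendsto a atTop (nhds (h 0)) := by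
    rw [tendsto_iff_norm_sub_tendsto_zero]
    refine squeeze_zero (fun n => norm_nonneg _) (fun n => le_trans (hanorm n)
      (mul_le_mul_of_nonneg_left (hsler n) (le_of_lt hL))) ?_
    have := hrlim.const_mul L
    simpa using this
  set b : ℕ → E2 := fun n => (r n)⁻¹ • (a n - h 0) with hb
  have hbg : ∀ n, b n = g n ((s n / r n) • u) := by
    intro n
    have hsc : r n • ((s n / r n) • u) = s n • u := by
      rw [smul_smul, mul_div_cancel₀ _ (ne_of_gt (hrpos n))]
    simp only [hb, hg, hsc, ha]
  have hbu : Tendsto b 𝒰 (nhds (hbar u)) := by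
    have hdiff : Tendsto (fun n => ‖b n - g n u‖) atTop (nhds 0) := by
      have hbnd : ∀ n, ‖b n - g n u‖ ≤ L * |s n / r n - 1| := by
        intro n
        rw [hbg n]
        refine le_trans (hgup n _ _) ?_
        have : (s n / r n) • u - u = (s n / r n - 1) • u := by
          rw [sub_smul, one_smul]
        rw [this, norm_smul, Real.norm_eq_abs, hu, mul_one]
      refine squeeze_zero (fun n => norm_nonneg _) hbnd ?_
      have h1 : Tendsto (fun n => s n / r n - 1) atTop (nhds 0) := by
        have := hsr1.sub_const 1
        simpa using this
      have := h1.abs.const_mul L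
      simpa using this
    have h2 : Tendsto (fun n => b n - g n u) 𝒰 (nhds 0) := by
      rw [tendsto_zero_iff_norm_tendsto_zero]
      exact hdiff.mono_left hU
    have h3 := (hbt u).add h2
    rw [add_zero] at h3
    have he : (fun n => g n u + (b n - g n u)) = b := by
      funext n; abel
    rwa [he] at h3
  have hbarlow : 1 / L ≤ ‖hbar u‖ := by
    have := (hbarbl u 0).1
    rw [hbar0, sub_zero, sub_zero, hu, mul_one] at this
    exact this
  have hcne : ‖hbar u‖ ≠ 0 := by
    have : 0 < 1 / L := by positivity
    intro h0; rw [h0] at hbarlow; linarith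
  set v : E2 := ‖hbar u‖⁻¹ • hbar u with hv
  have hvnorm : ‖v‖ = 1 := by
    rw [hv, norm_smul, Real.norm_eq_abs, abs_of_pos (inv_pos.mpr
      (lt_of_lt_of_le (by positivity) hbarlow)), inv_mul_cancel₀ hcne]
  set w : ℕ → E2 := fun n => ‖a n - h 0‖⁻¹ • (a n - h 0) with hw
  have hwb : ∀ n, w n = ‖b n‖⁻¹ • b n := by
    intro n
    have hda : ‖a n - h 0‖ ≠ 0 := by
      intro h0
      exact hane n (by rwa [norm_sub_eq_zero_iff] at h0)
    have hbnorm : ‖b n‖ = (r n)⁻¹ * ‖a n - h 0‖ := by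
      rw [hb, norm_smul, Real.norm_eq_abs, abs_of_pos (inv_pos.mpr (hrpos n))]
    have hcoef : ‖a n - h 0‖⁻¹ = ((r n)⁻¹ * ‖a n - h 0‖)⁻¹ * (r n)⁻¹ := by
      rw [mul_inv, inv_inv]
      field_simp
      rw [div_self (ne_of_gt (hrpos n))]
    rw [hw, hbnorm, hb, smul_smul, ← hcoef]
  have hwt : Tendsto w 𝒰 (nhds v) := by
    have h1 : Tendsto (fun n => ‖b n‖) 𝒰 (nhds ‖hbar u‖) := hbu.norm
    have h2 : Tendsto (fun n => ‖b n‖⁻¹) 𝒰 (nhds ‖hbar u‖⁻¹) := h1.inv₀ hcne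
    have h3 := h2.smul hbu
    rw [hv]
    have he : (fun n => ‖b n‖⁻¹ • b n) = w := by
      funext n; rw [hwb n]
    rwa [he] at h3
  have hcl : MapClusterPt v atTop w := by
    have hne : (Filter.map w ↑𝒰).NeBot := Filter.map_neBot
    have hle2 : Filter.map w ↑𝒰 ≤ nhds v ⊓ Filter.map w atTop :=
      le_inf hwt (Filter.map_mono hU)
    exact (hne.mono hle2 : (nhds v ⊓ Filter.map w atTop).NeBot)
  obtain ⟨ψ, hψ, hψt⟩ := TopologicalSpace.FirstCountableTopology.tendsto_subseq hcl
  refine ⟨‖hbar u‖, norm_nonneg _, v, ⟨hvnorm, fun j => a (ψ j), fun j => hamem (ψ j),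
    fun j => hane (ψ j), halim.comp hψ.tendsto_atTop, ?_⟩, ?_⟩
  · have : (fun j => ‖a (ψ j) - h 0‖⁻¹ • (a (ψ j) - h 0)) = w ∘ ψ := by
      funext j; simp [hw]
    rw [this]
    exact hψt
  · rw [hv, smul_smul, mul_inv_cancel₀ hcne, one_smul]
end
end

section
/- Let (r_n) be a sequence of positive reals monotonically decreasing to zero with sub-exponential decay, i.e., log(r_n)/n → 0 as n → ∞. Then there exists a strictly increasing sequence of indices (n_k), whose range has natural density one in ℕ, such that r_{n_k + 1}/r_{n_k} → 1 as k → ∞. -/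
open Filter Finset

/-- Window boundaries built from a threshold function `f`. -/
private def Nwin (f : ℕ → ℕ) : ℕ → ℕ
  | 0 => 0
  | j + 1 => max (Nwin f j + 1) (f (j + 1))

private lemma Nwin_mono (f : ℕ → ℕ) : Monotone (Nwin f) :=
  monotone_nat_of_le_succ fun j => le_trans (Nat.le_succ _) (le_max_left _ _)

private lemma Nwin_le_self (f : ℕ → ℕ) : ∀ j, j ≤ Nwin f j
  | 0 => le_rfl
  | j + 1 => le_trans (Nat.succ_le_succ (Nwin_le_self f j)) (le_max_left _ _)

private lemma Nwin_ge_f (f : ℕ → ℕ) (j : ℕ) (hj : 1 ≤ j) : f j ≤ Nwin f j := by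
  cases j with
  | zero => omega
  | succ j => exact le_max_right _ _

-- Main density lemma: if `a` is nonnegative with Cesàro averages tending to `0`, then
-- there is a predicate `p` whose set is infinite, whose complement has density zero, and
-- along whose enumeration `a` tends to `0`.
open Classical in
private lemma density_lemma (a : ℕ → ℝ) (ha0 : ∀ n, 0 ≤ a n)
    (havg : Tendsto (fun M : ℕ => (∑ n ∈ range M, a n) / M) atTop (nhds 0)) :
    ∃ p : ℕ → Prop, (setOf p).Infinite ∧
      (∀ ε > (0:ℝ), ∀ᶠ M : ℕ in atTop,
        ((((range M).filter fun n => ¬ p n)).card : ℝ) ≤ ε * M) ∧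
      Tendsto (fun k => a (Nat.nth p k)) atTop (nhds 0) := by
  classical
  -- density of the exceptional sets
  have hE : ∀ j : ℕ, Tendsto (fun M : ℕ =>
      ((((range M).filter fun n => 1 / ((j:ℝ) + 1) ≤ a n)).card : ℝ) / M) atTop (nhds 0) := by
    intro j
    have hjpos : (0:ℝ) < (j:ℝ) + 1 := by positivity
    have hub : ∀ M : ℕ, ((((range M).filter fun n => 1 / ((j:ℝ) + 1) ≤ a n)).card : ℝ) / M
        ≤ ((j:ℝ) + 1) * ((∑ n ∈ range M, a n) / M) := by
      intro M
      have h1 : ((((range M).filter fun n => 1 / ((j:ℝ) + 1) ≤ a n)).card : ℝ) * (1 / ((j:ℝ)+1))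
          ≤ ∑ n ∈ (range M).filter fun n => 1 / ((j:ℝ) + 1) ≤ a n, a n := by
        have := Finset.card_nsmul_le_sum ((range M).filter fun n => 1 / ((j:ℝ) + 1) ≤ a n)
          a (1 / ((j:ℝ)+1)) (fun x hx => (Finset.mem_filter.mp hx).2)
        simpa [nsmul_eq_mul] using this
      have h2 : ∑ n ∈ (range M).filter (fun n => 1 / ((j:ℝ) + 1) ≤ a n), a n
          ≤ ∑ n ∈ range M, a n :=
        Finset.sum_le_sum_of_subset_of_nonneg (Finset.filter_subset _ _)
          (fun i _ _ => ha0 i)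
      have h3 : ((((range M).filter fun n => 1 / ((j:ℝ) + 1) ≤ a n)).card : ℝ)
          ≤ ((j:ℝ)+1) * ∑ n ∈ range M, a n := by
        rw [mul_one_div, div_le_iff₀ hjpos] at h1
        calc ((((range M).filter fun n => 1 / ((j:ℝ) + 1) ≤ a n)).card : ℝ)
            ≤ (∑ n ∈ (range M).filter (fun n => 1 / ((j:ℝ) + 1) ≤ a n), a n) * ((j:ℝ)+1) := h1
          _ ≤ (∑ n ∈ range M, a n) * ((j:ℝ)+1) := by
              apply mul_le_mul_of_nonneg_right h2 hjpos.le
          _ = ((j:ℝ)+1) * ∑ n ∈ range M, a n := mul_comm _ _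
      calc ((((range M).filter fun n => 1 / ((j:ℝ) + 1) ≤ a n)).card : ℝ) / M
          ≤ (((j:ℝ)+1) * ∑ n ∈ range M, a n) / M := by gcongr
        _ = ((j:ℝ)+1) * ((∑ n ∈ range M, a n) / M) := mul_div_assoc _ _ _
    have hlb : ∀ M : ℕ, (0:ℝ) ≤ ((((range M).filter fun n => 1 / ((j:ℝ) + 1) ≤ a n)).card : ℝ) / M :=
      fun M => by positivity
    have := havg.const_mul ((j:ℝ)+1)
    rw [mul_zero] at this
    exact tendsto_of_tendsto_of_tendsto_of_le_of_le tendsto_const_nhds this hlb hub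
  -- thresholds
  have hfex : ∀ j : ℕ, ∃ m : ℕ, 1 ≤ m ∧ ∀ M : ℕ, m ≤ M →
      ((((range M).filter fun n => 1 / ((j:ℝ) + 1) ≤ a n)).card : ℝ) ≤ (M:ℝ) / ((j:ℝ) + 1) := by
    intro j
    have hjpos : (0:ℝ) < 1 / ((j:ℝ) + 1) := by positivity
    obtain ⟨m, hm⟩ := (Metric.tendsto_atTop.mp (hE j)) (1 / ((j:ℝ) + 1)) hjpos
    refine ⟨max m 1, le_max_right _ _, fun M hM => ?_⟩
    have hM1 : (1:ℕ) ≤ M := le_trans (le_max_right m 1) hM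
    have hMpos : (0:ℝ) < M := by exact_mod_cast hM1
    have h := hm M (le_trans (le_max_left m 1) hM)
    rw [Real.dist_eq, sub_zero, abs_of_nonneg (by positivity)] at h
    have h2 := (div_lt_iff₀ hMpos).mp h
    have h3 : (1 / ((j:ℝ) + 1)) * M = (M:ℝ) / ((j:ℝ) + 1) := by ring
    linarith
  choose f hf1 hf2 using hfex
  -- window index
  set w : ℕ → ℕ := fun n => Nat.findGreatest (fun j => Nwin f j ≤ n) n with hwdef
  have hwle : ∀ n, Nwin f (w n) ≤ n := fun n =>
    Nat.findGreatest_spec (P := fun j => Nwin f j ≤ n) (Nat.zero_le n) (Nat.zero_le n)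
  have hwge : ∀ J n, Nwin f J ≤ n → J ≤ w n := fun J n h =>
    Nat.le_findGreatest (le_trans (Nwin_le_self f J) h) h
  have hwmono : Monotone w := fun m n hmn =>
    Nat.findGreatest_mono (fun j hj => le_trans hj hmn) hmn
  set p : ℕ → Prop := fun n => a n < 1 / ((w n : ℝ) + 1) with hpdef
  -- density of the bad set
  have hB : ∀ ε > (0:ℝ), ∀ᶠ M : ℕ in atTop,
      ((((range M).filter fun n => ¬ p n)).card : ℝ) ≤ ε * M := by
    intro ε hε
    obtain ⟨J0, hJ0⟩ := exists_nat_gt (1 / ε)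
    set J := max J0 1 with hJdef
    have hJ1 : 1 ≤ J := le_max_right _ _
    have hJε : 1 / ((J:ℝ) + 1) ≤ ε := by
      have h1 : (1:ℝ) / ε < (J:ℝ) + 1 := by
        have : (J0:ℝ) ≤ J := Nat.cast_le.mpr (le_max_left _ _)
        linarith
      have hJpos : (0:ℝ) < (J:ℝ) + 1 := by positivity
      rw [div_lt_iff₀ hε] at h1
      rw [div_le_iff₀ hJpos]
      nlinarith
    filter_upwards [eventually_ge_atTop (Nwin f J)] with M hM
    have hwM : J ≤ w M := hwge J M hM
    have hwM1 : 1 ≤ w M := le_trans hJ1 hwM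
    have hfw : f (w M) ≤ M := le_trans (Nwin_ge_f f _ hwM1) (hwle M)
    have hss : (range M).filter (fun n => ¬ p n) ⊆
        (range M).filter (fun n => 1 / ((w M : ℝ) + 1) ≤ a n) := by
      intro n hn
      rw [mem_filter] at hn ⊢
      refine ⟨hn.1, ?_⟩
      have h1 : 1 / ((w n : ℝ) + 1) ≤ a n := not_lt.mp hn.2
      have h2 : w n ≤ w M := hwmono (le_of_lt (mem_range.mp hn.1))
      have h3 : 1 / ((w M : ℝ) + 1) ≤ 1 / ((w n : ℝ) + 1) := by
        apply one_div_le_one_div_of_le (by positivity)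
        have : (w n : ℝ) ≤ w M := Nat.cast_le.mpr h2
        linarith
      linarith
    have hcard : ((((range M).filter fun n => ¬ p n)).card : ℝ)
        ≤ ((((range M).filter fun n => 1 / ((w M : ℝ) + 1) ≤ a n)).card : ℝ) :=
      Nat.cast_le.mpr (Finset.card_le_card hss)
    have hEb := hf2 (w M) M hfw
    have h4 : (M:ℝ) / ((w M : ℝ) + 1) ≤ (M:ℝ) / ((J:ℝ) + 1) := by
      gcongr
    have h5 : (M:ℝ) / ((J:ℝ) + 1) ≤ ε * M := by
      have hMnn : (0:ℝ) ≤ M := Nat.cast_nonneg M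
      have := mul_le_mul_of_nonneg_left hJε hMnn
      calc (M:ℝ) / ((J:ℝ) + 1) = (M:ℝ) * (1 / ((J:ℝ) + 1)) := by ring
        _ ≤ (M:ℝ) * ε := this
        _ = ε * M := mul_comm _ _
    linarith
  -- infinitude
  have hinf : (setOf p).Infinite := by
    apply Set.infinite_of_forall_exists_gt
    intro m
    by_contra hcon
    push_neg at hcon
    obtain ⟨M0, hM0⟩ := eventually_atTop.mp (hB (1/2) (by norm_num))
    set M := max M0 (2 * m + 4) with hMdef
    have hMge : 2 * m + 4 ≤ M := le_max_right _ _
    have h1 := hM0 M (le_max_left _ _)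
    have hss : (range M) \ (range (m+1)) ⊆ (range M).filter (fun n => ¬ p n) := by
      intro n hn
      rw [Finset.mem_sdiff, mem_range, mem_range] at hn
      rw [mem_filter, mem_range]
      refine ⟨hn.1, fun hp => ?_⟩
      have := hcon n hp
      omega
    have hcard := Finset.card_le_card hss
    rw [Finset.card_sdiff_of_subset (by intro x; rw [mem_range, mem_range]; omega)] at hcard
    rw [Finset.card_range, Finset.card_range] at hcard
    have h2 : ((M - (m+1) : ℕ) : ℝ) ≤ (((range M).filter fun n => ¬ p n).card : ℝ) :=
      Nat.cast_le.mpr hcard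
    rw [Nat.cast_sub (by omega)] at h2
    push_cast at h2 h1 ⊢
    have hMr : (2 * (m:ℝ) + 4) ≤ M := by exact_mod_cast hMge
    linarith
  -- limit along the enumeration
  have halim : Tendsto (fun k => a (Nat.nth p k)) atTop (nhds 0) := by
    rw [Metric.tendsto_atTop]
    intro ε hε
    obtain ⟨J0, hJ0⟩ := exists_nat_gt (1 / ε)
    have hJε : 1 / ((J0:ℝ) + 1) < ε := by
      have h1 : (1:ℝ) / ε < (J0:ℝ) + 1 := by linarith
      have hJpos : (0:ℝ) < (J0:ℝ) + 1 := by positivity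
      rw [div_lt_iff₀ hε] at h1
      rw [div_lt_iff₀ hJpos]
      nlinarith
    have hev : ∀ᶠ k in atTop, Nwin f J0 ≤ Nat.nth p k :=
      (Nat.nth_strictMono hinf).tendsto_atTop.eventually (eventually_ge_atTop (Nwin f J0))
    obtain ⟨K, hK⟩ := eventually_atTop.mp hev
    refine ⟨K, fun k hk => ?_⟩
    have hmem : p (Nat.nth p k) := Nat.nth_mem_of_infinite hinf k
    have hwk : J0 ≤ w (Nat.nth p k) := hwge J0 _ (hK k hk)
    have h1 : a (Nat.nth p k) < 1 / ((w (Nat.nth p k) : ℝ) + 1) := hmem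
    have h2 : 1 / ((w (Nat.nth p k) : ℝ) + 1) ≤ 1 / ((J0:ℝ) + 1) := by
      apply one_div_le_one_div_of_le (by positivity)
      have : (J0:ℝ) ≤ w (Nat.nth p k) := Nat.cast_le.mpr hwk
      linarith
    rw [Real.dist_eq, sub_zero, abs_of_nonneg (ha0 _)]
    linarith
  exact ⟨p, hinf, hB, halim⟩

/-- If `(r n)` is positive, monotonically decreasing to zero, with sub-exponential decay,
then there is a strictly increasing sequence of indices `nk`, whose range has natural
density one, along which `r (nk k + 1) / r (nk k) → 1`. -/
theorem regular_subsequence (r : ℕ → ℝ) (hpos : ∀ n, 0 < r n) (hanti : Antitone r)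
    (hlim : Tendsto r atTop (nhds 0))
    (hsub : Tendsto (fun n : ℕ => Real.log (r n) / n) atTop (nhds 0)) :
    ∃ nk : ℕ → ℕ, StrictMono nk ∧
      Tendsto (fun N : ℕ => (Nat.card ↑(Set.range nk ∩ Set.Icc 1 N) : ℝ) / N)
        atTop (nhds 1) ∧
      Tendsto (fun k => r (nk k + 1) / r (nk k)) atTop (nhds 1) := by
  classical
  set a : ℕ → ℝ := fun n => Real.log (r n) - Real.log (r (n + 1)) with ha
  have ha0 : ∀ n, 0 ≤ a n := fun n =>
    sub_nonneg.mpr (Real.log_le_log (hpos (n + 1)) (hanti (Nat.le_succ n)))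
  have hsum : ∀ M : ℕ, ∑ n ∈ range M, a n = Real.log (r 0) - Real.log (r M) :=
    fun M => Finset.sum_range_sub' (fun n => Real.log (r n)) M
  have havg : Tendsto (fun M : ℕ => (∑ n ∈ range M, a n) / M) atTop (nhds 0) := by
    have h1 : Tendsto (fun M : ℕ => Real.log (r 0) / M - Real.log (r M) / M)
        atTop (nhds 0) := by
      have := (tendsto_const_div_atTop_nhds_zero_nat (Real.log (r 0))).sub hsub
      simpa using this
    refine h1.congr fun M => ?_
    rw [hsum M, sub_div]
  obtain ⟨p, hinf, hB, halim⟩ := density_lemma a ha0 havg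
  refine ⟨Nat.nth p, Nat.nth_strictMono hinf, ?_, ?_⟩
  · -- density one
    have hrange : Set.range (Nat.nth p) = setOf p := Nat.range_nth_of_infinite hinf
    have hcard : ∀ N : ℕ, (Nat.card ↑(Set.range (Nat.nth p) ∩ Set.Icc 1 N) : ℝ)
        = (((Finset.Icc 1 N).filter p).card : ℝ) := by
      intro N
      rw [hrange]
      have hset : setOf p ∩ Set.Icc 1 N = ↑((Finset.Icc 1 N).filter p) := by
        ext n
        simp only [Set.mem_inter_iff, Set.mem_setOf_eq, Set.mem_Icc, Finset.coe_filter,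
          Finset.mem_Icc]
        tauto
      rw [hset, Nat.card_coe_set_eq, Set.ncard_coe_finset]
    rw [Metric.tendsto_atTop]
    intro ε hε
    obtain ⟨M0, hM0⟩ := eventually_atTop.mp (hB (ε / 4) (by positivity))
    refine ⟨max M0 1, fun N hN => ?_⟩
    have hN1 : (1:ℕ) ≤ N := le_trans (le_max_right _ _) hN
    have hNpos : (0:ℝ) < N := by exact_mod_cast hN1
    have hpart : ((Finset.Icc 1 N).filter p).card
        + ((Finset.Icc 1 N).filter (fun n => ¬ p n)).card = N := by
      rw [Finset.card_filter_add_card_filter_not, Nat.card_Icc]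
      omega
    have hss : (Finset.Icc 1 N).filter (fun n => ¬ p n)
        ⊆ (range (N + 1)).filter (fun n => ¬ p n) := by
      apply Finset.filter_subset_filter
      intro n hn
      rw [Finset.mem_Icc] at hn
      rw [mem_range]
      omega
    have hd : (((Finset.Icc 1 N).filter (fun n => ¬ p n)).card : ℝ)
        ≤ (ε / 4) * (N + 1) := by
      have h1 : (((Finset.Icc 1 N).filter (fun n => ¬ p n)).card : ℝ)
          ≤ (((range (N + 1)).filter (fun n => ¬ p n)).card : ℝ) :=
        Nat.cast_le.mpr (Finset.card_le_card hss)
      have h2 := hM0 (N + 1) (by omega)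
      push_cast at h2
      linarith
    have hceq : (((Finset.Icc 1 N).filter p).card : ℝ)
        = (N : ℝ) - (((Finset.Icc 1 N).filter (fun n => ¬ p n)).card : ℝ) := by
      have := congrArg (fun m : ℕ => (m : ℝ)) hpart
      push_cast at this
      linarith
    rw [hcard N, Real.dist_eq, hceq]
    have hda : (0:ℝ) ≤ (((Finset.Icc 1 N).filter (fun n => ¬ p n)).card : ℝ) :=
      Nat.cast_nonneg _
    have habs : ((N : ℝ) - (((Finset.Icc 1 N).filter (fun n => ¬ p n)).card : ℝ)) / N - 1
        = -((((Finset.Icc 1 N).filter (fun n => ¬ p n)).card : ℝ) / N) := by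
      field_simp
      ring
    rw [habs, abs_neg, abs_of_nonneg (by positivity)]
    rw [div_lt_iff₀ hNpos]
    have hN2 : (N:ℝ) + 1 ≤ 2 * N := by
      have : (1:ℝ) ≤ N := by exact_mod_cast hN1
      linarith
    nlinarith
  · -- ratio limit
    have hratio : ∀ k, r (Nat.nth p k + 1) / r (Nat.nth p k)
        = Real.exp (-(a (Nat.nth p k))) := by
      intro k
      rw [ha]
      simp only
      rw [neg_sub, Real.exp_sub, Real.exp_log (hpos _), Real.exp_log (hpos _)]
    have h2 : Tendsto (fun k => Real.exp (-(a (Nat.nth p k)))) atTop (nhds 1) := by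
      have := (Real.continuous_exp.tendsto (-0)).comp halim.neg
      simpa [Function.comp_def] using this
    exact h2.congr fun k => (hratio k).symm
end

section
/- Let A ⊆ ℝ^d, let o be a point of the closure of A satisfying the subsequence selection property (S̃SP), and let h : ℝ^d → ℝ^d be a bi-Lipschitz homeomorphism with h(o) = o. Then there exists a bi-Lipschitz homeomorphism h̄ of ℝ^d such that h̄(D(A)) ⊆ LD(h(A)), where D(A) is the set of asymptotic directions of A at o and LD(h(A)) is the cone over the set of asymptotic directions of h(A) at o. -/
open Filter

noncomputable section

/-- The subsequence selection property SSP-tilde at `o ∈ closure A`: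
there is a regular sequence of radii `r` around `o` such that every asymptotic direction `u`
is approached by a sequence `a n ∈ A` with `r (n+1) ≤ ‖a n - o‖ ≤ r n` eventually. -/
def SSPt {d : ℕ} (A : Set (EuclideanSpace ℝ (Fin d))) (o : EuclideanSpace ℝ (Fin d)) : Prop :=
  ∃ r : ℕ → ℝ, (∀ n, 0 < r n) ∧ Antitone r ∧ Tendsto r atTop (nhds 0) ∧
    (∃ nk : ℕ → ℕ, StrictMono nk ∧
      Tendsto (fun k => r (nk k + 1) / r (nk k)) atTop (nhds 1)) ∧
    ∀ u ∈ asymDirs A o, ∃ a : ℕ → EuclideanSpace ℝ (Fin d), (∀ n, a n ∈ A) ∧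
      (∀ᶠ n in atTop, r (n + 1) ≤ ‖a n - o‖ ∧ ‖a n - o‖ ≤ r n) ∧
      Tendsto (fun n => ‖a n - o‖⁻¹ • (a n - o)) atTop (nhds u)

/-- If `o ∈ closure A` satisfies the subsequence selection property and `h` is a bi-Lipschitz
homeomorphism fixing `o`, then some bi-Lipschitz homeomorphism `h̄` maps the asymptotic
directions of `A` at `o` into the cone over the asymptotic directions of `h(A)` at `o`. -/
theorem dirs_into_cone {d : ℕ} (A : Set (EuclideanSpace ℝ (Fin d)))
    (o : EuclideanSpace ℝ (Fin d)) (ho : o ∈ closure A) (hssp : SSPt A o)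
    (h : EuclideanSpace ℝ (Fin d) → EuclideanSpace ℝ (Fin d))
    (hsurj : Function.Surjective h) (L : ℝ) (hL : 0 < L) (hbl : BiLip L h)
    (hfix : h o = o) :
    ∃ hbar : EuclideanSpace ℝ (Fin d) → EuclideanSpace ℝ (Fin d),
      Function.Surjective hbar ∧ (∃ L' > 0, BiLip L' hbar) ∧
      hbar '' asymDirs A o ⊆ cone (h '' A) o := by
  classical
  obtain ⟨r, hrpos, hranti, hr0, ⟨nk, hnk, hratio⟩, hsel⟩ := hssp
  have hLinv : (0:ℝ) < 1 / L := by positivity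
  set U : Filter ℕ := ↑(Filter.hyperfilter ℕ) with hUdef
  have hUne : U.NeBot := Ultrafilter.neBot _
  have hU_le : U ≤ atTop := by
    rw [← Nat.cofinite_eq_atTop]
    exact Filter.hyperfilter_le_cofinite
  have hrk : ∀ k, 0 < r (nk k) := fun k => hrpos _
  set F : ℕ → EuclideanSpace ℝ (Fin d) → EuclideanSpace ℝ (Fin d) :=
    fun k x => (r (nk k))⁻¹ • (h (o + r (nk k) • x) - o) with hFdef
  have hF0 : ∀ k, F k 0 = 0 := by
    intro k; simp [hFdef, hfix]
  have hFdiff : ∀ k x y, F k x - F k y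
      = (r (nk k))⁻¹ • (h (o + r (nk k) • x) - h (o + r (nk k) • y)) := by
    intro k x y
    simp only [hFdef, ← smul_sub]
    congr 1
    abel
  have harg : ∀ k (x y : EuclideanSpace ℝ (Fin d)),
      ‖(o + r (nk k) • x) - (o + r (nk k) • y)‖ = r (nk k) * ‖x - y‖ := by
    intro k x y
    rw [show (o + r (nk k) • x) - (o + r (nk k) • y) = r (nk k) • (x - y) by
        rw [smul_sub]; abel,
      norm_smul, Real.norm_eq_abs, abs_of_pos (hrk k)]
  have hFup : ∀ k x y, ‖F k x - F k y‖ ≤ L * ‖x - y‖ := by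
    intro k x y
    rw [hFdiff, norm_smul, Real.norm_eq_abs, abs_of_pos (inv_pos.2 (hrk k))]
    have h2 := (hbl (o + r (nk k) • x) (o + r (nk k) • y)).2
    rw [harg] at h2
    calc (r (nk k))⁻¹ * ‖h (o + r (nk k) • x) - h (o + r (nk k) • y)‖
        ≤ (r (nk k))⁻¹ * (L * (r (nk k) * ‖x - y‖)) :=
          mul_le_mul_of_nonneg_left h2 (inv_pos.2 (hrk k)).le
      _ = L * ‖x - y‖ := by
          rw [show (r (nk k))⁻¹ * (L * (r (nk k) * ‖x - y‖))
              = (r (nk k))⁻¹ * r (nk k) * (L * ‖x - y‖) from by ring,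
            inv_mul_cancel₀ (hrk k).ne', one_mul]
  have hFlow : ∀ k x y, (1 / L) * ‖x - y‖ ≤ ‖F k x - F k y‖ := by
    intro k x y
    rw [hFdiff, norm_smul, Real.norm_eq_abs, abs_of_pos (inv_pos.2 (hrk k))]
    have h1 := (hbl (o + r (nk k) • x) (o + r (nk k) • y)).1
    rw [harg] at h1
    calc (1 / L) * ‖x - y‖
        = (r (nk k))⁻¹ * ((1 / L) * (r (nk k) * ‖x - y‖)) := by
          rw [show (r (nk k))⁻¹ * (1 / L * (r (nk k) * ‖x - y‖))
              = (r (nk k))⁻¹ * r (nk k) * (1 / L * ‖x - y‖) from by ring,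
            inv_mul_cancel₀ (hrk k).ne', one_mul]
      _ ≤ (r (nk k))⁻¹ * ‖h (o + r (nk k) • x) - h (o + r (nk k) • y)‖ :=
          mul_le_mul_of_nonneg_left h1 (inv_pos.2 (hrk k)).le
  -- every norm-bounded sequence has a limit along the hyperfilter
  have hlimex : ∀ (v : ℕ → EuclideanSpace ℝ (Fin d)) (C : ℝ), (∀ k, ‖v k‖ ≤ C) →
      ∃ c, Tendsto v U (nhds c) := by
    intro v C hv
    obtain ⟨c, -, hc⟩ :=
      (isCompact_closedBall (0 : EuclideanSpace ℝ (Fin d)) C).ultrafilter_le_nhds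
        (Ultrafilter.map v (Filter.hyperfilter ℕ))
        (by
          rw [Ultrafilter.coe_map, Filter.le_principal_iff, Filter.mem_map]
          exact Filter.univ_mem' fun k => by
            simpa [Metric.mem_closedBall, dist_eq_norm] using hv k)
    refine ⟨c, ?_⟩
    rwa [Filter.Tendsto, ← Ultrafilter.coe_map]
  have key : ∀ x, ∃ c, Tendsto (fun k => F k x) U (nhds c) := by
    intro x
    refine hlimex _ (L * ‖x‖) fun k => ?_
    have hx := hFup k x 0
    rw [hF0, sub_zero, sub_zero] at hx
    exact hx
  set hbar : EuclideanSpace ℝ (Fin d) → EuclideanSpace ℝ (Fin d) :=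
    fun x => Classical.choose (key x) with hbardef
  have hbarT : ∀ x, Tendsto (fun k => F k x) U (nhds (hbar x)) :=
    fun x => Classical.choose_spec (key x)
  have hFsurj : ∀ k y, ∃ x, F k x = y := by
    intro k y
    obtain ⟨z, hz⟩ := hsurj (o + r (nk k) • y)
    refine ⟨(r (nk k))⁻¹ • (z - o), ?_⟩
    have hro : o + r (nk k) • (r (nk k))⁻¹ • (z - o) = z := by
      rw [smul_smul, mul_inv_cancel₀ (hrk k).ne', one_smul]
      abel
    simp only [hFdef, hro, hz]
    rw [add_sub_cancel_left, smul_smul, inv_mul_cancel₀ (hrk k).ne', one_smul]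
  refine ⟨hbar, ?_, ⟨L, hL, ?_⟩, ?_⟩
  · -- surjectivity
    intro y
    choose xk hxk using fun k => hFsurj k y
    have hxkb : ∀ k, ‖xk k‖ ≤ L * ‖y‖ := by
      intro k
      have hlow := hFlow k (xk k) 0
      rw [hF0, sub_zero, sub_zero, hxk] at hlow
      calc ‖xk k‖ = L * ((1 / L) * ‖xk k‖) := by
            rw [show L * (1 / L * ‖xk k‖) = L * (1 / L) * ‖xk k‖ from by ring,
              mul_one_div, div_self hL.ne', one_mul]
        _ ≤ L * ‖y‖ := mul_le_mul_of_nonneg_left hlow hL.le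
    obtain ⟨x, hx⟩ := hlimex xk (L * ‖y‖) hxkb
    refine ⟨x, ?_⟩
    have h2 : Tendsto (fun k => F k x) U (nhds y) := by
      rw [tendsto_iff_norm_sub_tendsto_zero]
      have hle : ∀ k, ‖F k x - y‖ ≤ L * ‖x - xk k‖ := by
        intro k
        rw [← hxk k]
        exact hFup k x (xk k)
      have h0 : Tendsto (fun k => L * ‖x - xk k‖) U (nhds 0) := by
        have := (((tendsto_const_nhds : Tendsto (fun _ : ℕ => x) U (nhds x)).sub
          hx).norm).const_mul L
        simpa using this
      exact squeeze_zero (fun k => norm_nonneg _) hle h0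
    exact tendsto_nhds_unique (hbarT x) h2
  · -- bi-Lipschitz
    intro x y
    have hsub : Tendsto (fun k => ‖F k x - F k y‖) U (nhds ‖hbar x - hbar y‖) :=
      ((hbarT x).sub (hbarT y)).norm
    exact ⟨ge_of_tendsto hsub (Filter.Eventually.of_forall fun k => hFlow k x y),
      le_of_tendsto hsub (Filter.Eventually.of_forall fun k => hFup k x y)⟩
  · -- cone property
    rintro y ⟨u, hu, rfl⟩
    obtain ⟨a, haA, haev, hadir⟩ := hsel u hu
    have hnkT : Tendsto nk atTop atTop := hnk.tendsto_atTop
    have haev' : ∀ᶠ k in atTop,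
        r (nk k + 1) ≤ ‖a (nk k) - o‖ ∧ ‖a (nk k) - o‖ ≤ r (nk k) := hnkT.eventually haev
    set x : ℕ → EuclideanSpace ℝ (Fin d) := fun k => (r (nk k))⁻¹ • (a (nk k) - o) with hxdef
    -- x k → u
    have hxu : Tendsto x atTop (nhds u) := by
      have hsr : Tendsto (fun k => ‖a (nk k) - o‖ / r (nk k)) atTop (nhds 1) := by
        refine tendsto_of_tendsto_of_tendsto_of_le_of_le' hratio tendsto_const_nhds ?_ ?_
        · filter_upwards [haev'] with k hk
          exact (div_le_div_iff_of_pos_right (hrk k)).2 hk.1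
        · filter_upwards [haev'] with k hk
          exact div_le_one_of_le₀ hk.2 (hrk k).le
      have hdir : Tendsto (fun k => ‖a (nk k) - o‖⁻¹ • (a (nk k) - o)) atTop (nhds u) :=
        hadir.comp hnkT
      have hmul := hsr.smul hdir
      rw [one_smul] at hmul
      refine hmul.congr' ?_
      filter_upwards [haev'] with k hk
      have hs : (0:ℝ) < ‖a (nk k) - o‖ := lt_of_lt_of_le (hrpos _) hk.1
      show (‖a (nk k) - o‖ / r (nk k)) • ‖a (nk k) - o‖⁻¹ • (a (nk k) - o)
          = (r (nk k))⁻¹ • (a (nk k) - o)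
      rw [smul_smul, div_mul_eq_mul_div, mul_inv_cancel₀ hs.ne', one_div]
    -- w k = F k (x k) = rescaled image points
    set w : ℕ → EuclideanSpace ℝ (Fin d) :=
      fun k => (r (nk k))⁻¹ • (h (a (nk k)) - o) with hwdef
    have hwF : ∀ k, F k (x k) = w k := by
      intro k
      have harg2 : o + r (nk k) • ((r (nk k))⁻¹ • (a (nk k) - o)) = a (nk k) := by
        rw [smul_smul, mul_inv_cancel₀ (hrk k).ne', one_smul]
        abel
      show (r (nk k))⁻¹ • (h (o + r (nk k) • ((r (nk k))⁻¹ • (a (nk k) - o))) - o)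
          = (r (nk k))⁻¹ • (h (a (nk k)) - o)
      rw [harg2]
    -- w → hbar u along U
    have hwlim : Tendsto w U (nhds (hbar u)) := by
      have hdiff0 : Tendsto (fun k => w k - F k u) U (nhds 0) := by
        rw [tendsto_zero_iff_norm_tendsto_zero]
        have hle : ∀ k, ‖w k - F k u‖ ≤ L * ‖x k - u‖ := by
          intro k
          rw [← hwF k]
          exact hFup k (x k) u
        have h0 : Tendsto (fun k => L * ‖x k - u‖) U (nhds 0) := by
          have := ((hxu.sub (tendsto_const_nhds : Tendsto (fun _ : ℕ => u) atTop
            (nhds u))).norm.const_mul L).mono_left hU_le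
          simpa using this
        exact squeeze_zero (fun k => norm_nonneg _) hle h0
      have := (hbarT u).add hdiff0
      rw [add_zero] at this
      refine this.congr fun k => ?_
      abel
    have hnormw : Tendsto (fun k => ‖w k‖) U (nhds ‖hbar u‖) := hwlim.norm
    -- the norm of hbar u is at least 1/L > 0
    have hwlow : ∀ᶠ k in U, (1 / L) * (r (nk k + 1) / r (nk k)) ≤ ‖w k‖ := by
      refine hU_le ?_
      filter_upwards [haev'] with k hk
      have h1 := (hbl (a (nk k)) o).1
      rw [hfix] at h1
      have hnw : ‖w k‖ = (r (nk k))⁻¹ * ‖h (a (nk k)) - o‖ := by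
        show ‖(r (nk k))⁻¹ • (h (a (nk k)) - o)‖ = _
        rw [norm_smul, Real.norm_eq_abs, abs_of_pos (inv_pos.2 (hrk k))]
      rw [hnw]
      calc (1 / L) * (r (nk k + 1) / r (nk k))
          ≤ (1 / L) * (‖a (nk k) - o‖ / r (nk k)) :=
            mul_le_mul_of_nonneg_left ((div_le_div_iff_of_pos_right (hrk k)).2 hk.1) hLinv.le
        _ = (r (nk k))⁻¹ * ((1 / L) * ‖a (nk k) - o‖) := by ring
        _ ≤ (r (nk k))⁻¹ * ‖h (a (nk k)) - o‖ :=
            mul_le_mul_of_nonneg_left h1 (inv_pos.2 (hrk k)).le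
    have hratioU : Tendsto (fun k => (1 / L) * (r (nk k + 1) / r (nk k))) U
        (nhds ((1 / L) * 1)) := (hratio.const_mul (1 / L)).mono_left hU_le
    have htpos : (0:ℝ) < ‖hbar u‖ := by
      have hle : (1 / L) * 1 ≤ ‖hbar u‖ := le_of_tendsto_of_tendsto hratioU hnormw hwlow
      calc (0:ℝ) < (1 / L) * 1 := by positivity
        _ ≤ ‖hbar u‖ := hle
    set t : ℝ := ‖hbar u‖ with htdef
    set u' : EuclideanSpace ℝ (Fin d) := t⁻¹ • hbar u with hu'def
    -- direction sequence of the image points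
    set dd : ℕ → EuclideanSpace ℝ (Fin d) :=
      fun k => ‖h (a (nk k)) - o‖⁻¹ • (h (a (nk k)) - o) with hdddef
    have hddw : ∀ k, dd k = ‖w k‖⁻¹ • w k := by
      intro k
      have hnw : ‖w k‖ = (r (nk k))⁻¹ * ‖h (a (nk k)) - o‖ := by
        show ‖(r (nk k))⁻¹ • (h (a (nk k)) - o)‖ = _
        rw [norm_smul, Real.norm_eq_abs, abs_of_pos (inv_pos.2 (hrk k))]
      show ‖h (a (nk k)) - o‖⁻¹ • (h (a (nk k)) - o)
          = ‖w k‖⁻¹ • (r (nk k))⁻¹ • (h (a (nk k)) - o)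
      rw [hnw, mul_inv, inv_inv, smul_smul]
      congr 1
      rw [mul_comm (r (nk k)), mul_assoc, mul_inv_cancel₀ (hrk k).ne', mul_one]
    have hddlim : Tendsto dd U (nhds u') := by
      have h5 := (hnormw.inv₀ htpos.ne').smul hwlim
      rw [← hu'def] at h5
      exact h5.congr fun k => (hddw k).symm
    -- u' is an asymptotic direction of h '' A
    have hu'norm : ‖u'‖ = 1 := by
      rw [hu'def, norm_smul, Real.norm_eq_abs, abs_of_pos (inv_pos.2 htpos), ← htdef,
        inv_mul_cancel₀ htpos.ne']
    have himo : Tendsto (fun k => h (a (nk k))) atTop (nhds o) := by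
      rw [tendsto_iff_norm_sub_tendsto_zero]
      have hle : ∀ᶠ k in atTop, ‖h (a (nk k)) - o‖ ≤ L * r (nk k) := by
        filter_upwards [haev'] with k hk
        have h2 := (hbl (a (nk k)) o).2
        rw [hfix] at h2
        calc ‖h (a (nk k)) - o‖ ≤ L * ‖a (nk k) - o‖ := h2
          _ ≤ L * r (nk k) := mul_le_mul_of_nonneg_left hk.2 hL.le
      have h0 : Tendsto (fun k => L * r (nk k)) atTop (nhds 0) := by
        have := ((hr0.comp hnkT).const_mul L)
        simpa using this
      exact squeeze_zero' (Filter.Eventually.of_forall fun k => norm_nonneg _) hle h0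
    -- choose a subsequence realizing u' as an asymptotic direction
    have hTm : ∀ m : ℕ, ∃ k : ℕ, dist (dd k) u' < 1 / (m + 1) ∧
        dist (h (a (nk k))) o < 1 / (m + 1) ∧ r (nk k + 1) ≤ ‖a (nk k) - o‖ := by
      intro m
      have hmp : (0:ℝ) < 1 / (m + 1) := by positivity
      have e1 : ∀ᶠ k in U, dist (dd k) u' < 1 / (m + 1) :=
        hddlim (Metric.ball_mem_nhds _ hmp)
      have e2 : ∀ᶠ k in U, dist (h (a (nk k))) o < 1 / (m + 1) :=
        hU_le (himo (Metric.ball_mem_nhds _ hmp))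
      have e3 : ∀ᶠ k in U, r (nk k + 1) ≤ ‖a (nk k) - o‖ :=
        hU_le (haev'.mono fun k hk => hk.1)
      obtain ⟨k, ⟨hk1, hk2⟩, hk3⟩ := ((e1.and e2).and e3).exists
      exact ⟨k, hk1, hk2, hk3⟩
    choose km hkm1 hkm2 hkm3 using hTm
    set b : ℕ → EuclideanSpace ℝ (Fin d) := fun m => h (a (nk (km m))) with hbdef
    have hone : Tendsto (fun m : ℕ => 1 / ((m:ℝ) + 1)) atTop (nhds 0) :=
      tendsto_one_div_add_atTop_nhds_zero_nat
    have hu'mem : u' ∈ asymDirs (h '' A) o := by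
      refine ⟨hu'norm, b, fun m => ⟨a (nk (km m)), haA _, rfl⟩, ?_, ?_, ?_⟩
      · intro m
        have hs : (0:ℝ) < ‖a (nk (km m)) - o‖ := lt_of_lt_of_le (hrpos _) (hkm3 m)
        have h1 := (hbl (a (nk (km m))) o).1
        rw [hfix] at h1
        intro hcon
        have hcon' : h (a (nk (km m))) = o := hcon
        rw [hcon'] at h1
        simp only [sub_self, norm_zero] at h1
        nlinarith
      · rw [tendsto_iff_dist_tendsto_zero]
        refine squeeze_zero (fun m => dist_nonneg) (fun m => (hkm2 m).le) hone
      · rw [tendsto_iff_dist_tendsto_zero]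
        refine squeeze_zero (fun m => dist_nonneg) (fun m => ?_) hone
        exact le_of_eq_of_le (by rfl : dist (‖b m - o‖⁻¹ • (b m - o)) u' = dist (dd (km m)) u')
          (hkm1 m).le
    refine ⟨t, htpos.le, u', hu'mem, ?_⟩
    rw [hu'def, smul_smul, mul_inv_cancel₀ htpos.ne', one_smul]
end
end

section
/- Let (a_n) be an increasing sequence of positive reals tending to infinity, and let g : ℕ → ℝ be a function with a_n ≤ g(n) for all n, g(n) → ∞, and log(g(n))/n → 0 as n → ∞. For m ∈ ℕ let R_m = {n ∈ ℕ : a_{n+1}/a_n ≥ 1 + 1/m}. Then there exists N₀ (independent of m) such that for all N ≥ N₀ and all m ≥ 1, |R_m ∩ [1, N]| ≤ 3 m · log(g(N)). -/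
open Filter

/-- Telescoping: the product of ratio lower bounds over bad indices in `[1,N]` bounds `a (N+1)`. -/
lemma bad_key (a : ℕ → ℝ) (hpos : ∀ n, 0 < a n) (hmono : StrictMono a) (m : ℕ)
    [DecidablePred fun n => 1 + 1 / (m : ℝ) ≤ a (n + 1) / a n] :
    ∀ N : ℕ, a 1 * (1 + 1 / (m : ℝ)) ^
      (((Finset.Icc 1 N).filter (fun n => 1 + 1 / (m : ℝ) ≤ a (n + 1) / a n)).card) ≤ a (N + 1) := by
  intro N
  induction N with
  | zero => simp
  | succ N ih =>
    have hc : (0 : ℝ) ≤ 1 + 1 / (m : ℝ) := by positivity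
    have hicc : Finset.Icc 1 (N + 1) = insert (N + 1) (Finset.Icc 1 N) := by
      ext x; simp only [Finset.mem_Icc, Finset.mem_insert]; omega
    rw [hicc, Finset.filter_insert]
    by_cases hP : 1 + 1 / (m : ℝ) ≤ a (N + 1 + 1) / a (N + 1)
    · rw [if_pos hP, Finset.card_insert_of_notMem (by simp)]
      have h1 : (1 + 1 / (m : ℝ)) * a (N + 1) ≤ a (N + 2) :=
        (le_div_iff₀ (hpos (N + 1))).mp hP
      calc a 1 * (1 + 1 / (m : ℝ)) ^ (_ + 1)
          = (1 + 1 / (m : ℝ)) * (a 1 * (1 + 1 / (m : ℝ)) ^ _) := by ring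
        _ ≤ (1 + 1 / (m : ℝ)) * a (N + 1) := mul_le_mul_of_nonneg_left ih hc
        _ ≤ a (N + 2) := h1
    · rw [if_neg hP]
      exact ih.trans (hmono (by omega)).le

/-- Claim 1: if `(a n)` is an increasing positive sequence tending to infinity, dominated by a
function `g` with `log (g n) / n → 0`, then for all large `N` (uniformly in `m ≥ 1`) the set
`R_m = {n : a (n+1) / a n ≥ 1 + 1/m}` satisfies `|R_m ∩ [1, N]| ≤ 3 m log (g N)`. -/
theorem bad_indices_count (a : ℕ → ℝ) (hpos : ∀ n, 0 < a n) (hmono : StrictMono a)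
    (hinf : Tendsto a atTop atTop) (g : ℕ → ℝ) (hg : ∀ n, a n ≤ g n)
    (hginf : Tendsto g atTop atTop)
    (hsub : Tendsto (fun n : ℕ => Real.log (g n) / n) atTop (nhds 0)) :
    ∃ N₀ : ℕ, ∀ N ≥ N₀, ∀ m : ℕ, 1 ≤ m →
      (Nat.card ↑({n : ℕ | 1 + 1 / (m : ℝ) ≤ a (n + 1) / a n} ∩ Set.Icc 1 N) : ℝ) ≤
        3 * m * Real.log (g N) := by
  classical
  set B : ℝ := 2 * max 0 (-(Real.log (a 1))) + 1 with hB
  have hlog : Tendsto (fun n => Real.log (g n)) atTop atTop :=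
    Real.tendsto_log_atTop.comp hginf
  obtain ⟨N₀, hN₀⟩ := eventually_atTop.mp (hlog.eventually_ge_atTop B)
  refine ⟨max N₀ 1, fun N hN m hm => ?_⟩
  have hN1 : 1 ≤ N := le_trans (le_max_right _ _) hN
  have hBN : B ≤ Real.log (g N) := hN₀ N (le_trans (le_max_left _ _) hN)
  set P : ℕ → Prop := fun n => 1 + 1 / (m : ℝ) ≤ a (n + 1) / a n with hPdef
  -- rewrite Nat.card as a Finset card
  have hset : {n : ℕ | 1 + 1 / (m : ℝ) ≤ a (n + 1) / a n} ∩ Set.Icc 1 N =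
      ↑((Finset.Icc 1 N).filter P) := by
    ext n; simp [hPdef, and_comm]
  rw [hset, Nat.card_coe_set_eq, Set.ncard_coe_finset]
  set k : ℕ := ((Finset.Icc 1 (N - 1)).filter P).card with hk
  have hcard : ((Finset.Icc 1 N).filter P).card ≤ k + 1 := by
    have h1 : (Finset.Icc 1 N).filter P ⊆ insert N ((Finset.Icc 1 (N - 1)).filter P) := by
      intro x hx
      simp only [Finset.mem_filter, Finset.mem_Icc] at hx
      rcases eq_or_lt_of_le hx.1.2 with h | h
      · simp [h]
      · simp only [Finset.mem_insert, Finset.mem_filter, Finset.mem_Icc]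
        exact Or.inr ⟨⟨hx.1.1, by omega⟩, hx.2⟩
    exact (Finset.card_le_card h1).trans (Finset.card_insert_le _ _)
  -- key product bound
  have hkey := bad_key a hpos hmono m (N - 1)
  rw [show N - 1 + 1 = N by omega] at hkey
  have hm' : (1 : ℝ) ≤ (m : ℝ) := by exact_mod_cast hm
  have hmpos : (0 : ℝ) < m := by linarith
  have hc1 : (1 : ℝ) < 1 + 1 / (m : ℝ) := by
    have : (0 : ℝ) < 1 / m := by positivity
    linarith
  -- log of the product bound
  have hgNpos : 0 < g N := lt_of_lt_of_le (hpos N) (hg N)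
  have hcpos : (0 : ℝ) < 1 + 1 / (m : ℝ) := by linarith
  have hprodpos : 0 < a 1 * (1 + 1 / (m : ℝ)) ^ k := mul_pos (hpos 1) (pow_pos hcpos k)
  have hloglog : Real.log (a 1) + (k : ℝ) * Real.log (1 + 1 / (m : ℝ)) ≤ Real.log (g N) := by
    have := Real.log_le_log hprodpos (hkey.trans (hg N))
    rwa [Real.log_mul (ne_of_gt (hpos 1)) (pow_pos hcpos k).ne', Real.log_pow] at this
  -- lower bound on log (1 + 1/m)
  have hlogc : 1 / (2 * (m : ℝ)) ≤ Real.log (1 + 1 / (m : ℝ)) := by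
    have h1 : Real.log (1 / (1 + 1 / (m : ℝ))) ≤ 1 / (1 + 1 / (m : ℝ)) - 1 :=
      Real.log_le_sub_one_of_pos (by positivity)
    rw [Real.log_div one_ne_zero (by positivity), Real.log_one] at h1
    have h2 : 1 - 1 / (1 + 1 / (m : ℝ)) ≤ Real.log (1 + 1 / (m : ℝ)) := by linarith
    have h3 : 1 / (2 * (m : ℝ)) ≤ 1 - 1 / (1 + 1 / (m : ℝ)) := by
      have e1 : 1 - 1 / (1 + 1 / (m : ℝ)) = 1 / ((m : ℝ) + 1) := by
        rw [eq_div_iff (by positivity)]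
        field_simp
        ring
      rw [e1]
      exact one_div_le_one_div_of_le (by positivity) (by linarith)
    linarith
  have hkbound : (k : ℝ) ≤ 2 * m * (Real.log (g N) - Real.log (a 1)) := by
    have h1 : (k : ℝ) * (1 / (2 * (m : ℝ))) ≤ (k : ℝ) * Real.log (1 + 1 / (m : ℝ)) :=
      mul_le_mul_of_nonneg_left hlogc (Nat.cast_nonneg k)
    have h2 : (k : ℝ) * (1 / (2 * (m : ℝ))) ≤ Real.log (g N) - Real.log (a 1) := by linarith
    have h3 := mul_le_mul_of_nonneg_left h2 (by positivity : (0:ℝ) ≤ 2 * (m : ℝ))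
    have hmne : (m : ℝ) ≠ 0 := ne_of_gt hmpos
    calc (k : ℝ) = 2 * (m : ℝ) * ((k : ℝ) * (1 / (2 * (m : ℝ)))) := by field_simp
      _ ≤ 2 * (m : ℝ) * (Real.log (g N) - Real.log (a 1)) := h3
      _ = 2 * m * (Real.log (g N) - Real.log (a 1)) := by ring
  -- finish
  have hfin : ((k : ℝ) + 1) ≤ 3 * m * Real.log (g N) := by
    set L := Real.log (g N)
    set A := Real.log (a 1)
    set X := max 0 (-A) with hX
    have hX0 : 0 ≤ X := le_max_left _ _
    have hXA : -A ≤ X := le_max_right _ _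
    have hL : 2 * X + 1 ≤ L := hBN
    nlinarith [mul_nonneg (by linarith : (0:ℝ) ≤ (m:ℝ)) (by linarith : (0:ℝ) ≤ L - 2*X - 1),
      mul_nonneg (by linarith : (0:ℝ) ≤ (m:ℝ)) (by linarith : (0:ℝ) ≤ X + A)]
  calc (((Finset.Icc 1 N).filter P).card : ℝ) ≤ (k : ℝ) + 1 := by exact_mod_cast hcard
    _ ≤ 3 * m * Real.log (g N) := hfin
end

section
/- Let (a_n) be an increasing sequence of positive reals such that log(a_n)/n → 0 as n → ∞. Then there exists a set R ⊆ ℕ of natural density zero such that a_{n+1}/a_n → 1 as n → ∞ along n ∈ ℕ \ R. -/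
open Filter

/-- If `(a n)` is an increasing sequence of positive reals with `log (a n) / n → 0`, then there
is a set `R ⊆ ℕ` of natural density zero such that `a (n+1) / a n → 1` along `n ∉ R`. -/
theorem ratio_tendsto_one_off_sparse_set (a : ℕ → ℝ) (hpos : ∀ n, 0 < a n)
    (hmono : StrictMono a)
    (hsub : Tendsto (fun n : ℕ => Real.log (a n) / n) atTop (nhds 0)) :
    ∃ R : Set ℕ,
      Tendsto (fun N : ℕ => (Nat.card ↑(R ∩ Set.Icc 1 N) : ℝ) / N) atTop (nhds 0) ∧
      ∀ ε > 0, ∃ N : ℕ, ∀ n ≥ N, n ∉ R → |a (n + 1) / a n - 1| < ε := by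
  classical
  set g : ℕ → ℝ := fun n => Real.log (a (n+1)) - Real.log (a n) with hgdef
  have hgpos : ∀ n, 0 < g n := by
    intro n
    have h := Real.log_lt_log (hpos n) (hmono (Nat.lt_succ_self n))
    simpa [hgdef] using sub_pos.2 h
  set L : ℕ → ℝ := fun M => Real.log (a (M+1)) - Real.log (a 0) with hLdef
  have hLsum : ∀ M, ∑ n ∈ Finset.range (M+1), g n = L M := by
    intro M
    simpa [hgdef, hLdef] using Finset.sum_range_sub (fun n => Real.log (a n)) (M+1)
  -- counting lemma
  have hcount : ∀ (ε : ℝ), 0 < ε → ∀ M : ℕ,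
      (((Finset.range (M+1)).filter (fun n => ε ≤ g n)).card : ℝ) * ε ≤ L M := by
    intro ε hε M
    set F := (Finset.range (M+1)).filter (fun n => ε ≤ g n) with hF
    have h1 : (F.card : ℝ) * ε ≤ ∑ n ∈ F, g n := by
      have := Finset.card_nsmul_le_sum F g ε (fun x hx => (Finset.mem_filter.1 hx).2)
      simpa [nsmul_eq_mul] using this
    have h2 : ∑ n ∈ F, g n ≤ ∑ n ∈ Finset.range (M+1), g n :=
      Finset.sum_le_sum_of_subset_of_nonneg (Finset.filter_subset _ _)
        (fun i _ _ => (hgpos i).le)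
    calc (F.card : ℝ) * ε ≤ ∑ n ∈ F, g n := h1
      _ ≤ ∑ n ∈ Finset.range (M+1), g n := h2
      _ = L M := hLsum M
  -- L M / M → 0
  have hL : Tendsto (fun M : ℕ => L M / M) atTop (nhds 0) := by
    have h1 : Tendsto (fun M : ℕ => Real.log (a (M+1)) / ((M:ℝ)+1)) atTop (nhds 0) := by
      have h := hsub.comp (tendsto_add_atTop_nat 1)
      refine h.congr fun M => ?_
      simp only [Function.comp]
      norm_cast
    have h2 : Tendsto (fun M : ℕ => ((M:ℝ)+1) / M) atTop (nhds 1) := by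
      have h0 : Tendsto (fun M : ℕ => 1 + 1/(M:ℝ)) atTop (nhds 1) := by
        have := (tendsto_const_nhds (x := (1:ℝ)) (f := atTop)).add
          tendsto_one_div_atTop_nhds_zero_nat
        simpa using this
      refine h0.congr' ?_
      filter_upwards [eventually_ge_atTop 1] with M hM
      have hM0 : (M:ℝ) ≠ 0 := by
        have : (0:ℕ) < M := hM
        positivity
      field_simp
    have h3 : Tendsto (fun M : ℕ => Real.log (a (M+1)) / M) atTop (nhds 0) := by
      have := h1.mul h2
      rw [zero_mul] at this
      refine this.congr (fun M => ?_)
      have hne : ((M:ℝ)+1) ≠ 0 := by positivity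
      field_simp
    have h4 : Tendsto (fun M : ℕ => Real.log (a 0) / M) atTop (nhds 0) :=
      tendsto_const_div_atTop_nhds_zero_nat _
    have := h3.sub h4
    rw [sub_zero] at this
    refine this.congr (fun M => ?_)
    simp [hLdef, sub_div]
  -- thresholds
  have hT : ∀ k : ℕ, ∃ T : ℕ, ∀ M ≥ T, L M / M < 1 / ((k:ℝ)+1)^2 := by
    intro k
    have hε : (0:ℝ) < 1/((k:ℝ)+1)^2 := by positivity
    obtain ⟨T, hT⟩ := (Metric.tendsto_atTop.1 hL) _ hε
    refine ⟨T, fun M hM => lt_of_le_of_lt (le_abs_self _) ?_⟩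
    have := hT M hM
    rw [Real.dist_eq, sub_zero] at this
    exact this
  choose T hTspec using hT
  set Nk : ℕ → ℕ := fun k => Nat.rec (max (T 0) 1) (fun k ih => max (T (k+1)) (ih + 1)) k
    with hNkdef
  have hNkzero : Nk 0 = max (T 0) 1 := rfl
  have hNksucc : ∀ k, Nk (k+1) = max (T (k+1)) (Nk k + 1) := fun k => rfl
  have hNk0 : 1 ≤ Nk 0 := by rw [hNkzero]; exact le_max_right _ _
  have hNkT : ∀ k, T k ≤ Nk k := by
    intro k
    cases k with
    | zero => rw [hNkzero]; exact le_max_left _ _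
    | succ k => rw [hNksucc]; exact le_max_left _ _
  have hNkmono : StrictMono Nk := by
    apply strictMono_nat_of_lt_succ
    intro k
    rw [hNksucc]
    exact lt_of_lt_of_le (Nat.lt_succ_self _) (le_max_right _ _)
  have hP : ∀ k M, Nk k ≤ M → L M / M < 1/((k:ℝ)+1)^2 :=
    fun k M h => hTspec k M (le_trans (hNkT k) h)
  -- the diagonal index
  set Kf : ℕ → ℕ := fun n => Nat.findGreatest (fun k => Nk k ≤ n) n with hKfdef
  have hKle : ∀ n, Nk 0 ≤ n → Nk (Kf n) ≤ n := by
    intro n hn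
    exact Nat.findGreatest_spec (P := fun k => Nk k ≤ n) (Nat.zero_le n) hn
  have hKge : ∀ k n, Nk k ≤ n → k ≤ Kf n := by
    intro k n h
    exact Nat.le_findGreatest (le_trans (hNkmono.le_apply) h) h
  have hKmono : ∀ n m, n ≤ m → Kf n ≤ Kf m := by
    intro n m hnm
    exact Nat.findGreatest_mono (fun k hk => le_trans hk hnm) hnm
  -- the exceptional set
  refine ⟨{n | Nk 0 ≤ n ∧ 1/((Kf n : ℝ)+1) ≤ g n}, ?_, ?_⟩
  · -- density zero
    rw [Metric.tendsto_atTop]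
    intro ε hε
    obtain ⟨k, hk⟩ := exists_nat_one_div_lt hε
    refine ⟨Nk k, fun M hM => ?_⟩
    have hM1 : 1 ≤ M := le_trans (le_trans hNk0 (hNkmono.monotone (Nat.zero_le k))) hM
    have hMpos : (0:ℝ) < M := by exact_mod_cast hM1
    have hM0 : Nk 0 ≤ M := le_trans (hNkmono.monotone (Nat.zero_le k)) hM
    set F := (Finset.range (M+1)).filter (fun n => 1/((Kf M : ℝ)+1) ≤ g n) with hF
    have hsubset : {n | Nk 0 ≤ n ∧ 1/((Kf n : ℝ)+1) ≤ g n} ∩ Set.Icc 1 M ⊆ (F : Set ℕ) := by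
      rintro n ⟨⟨hn0, hng⟩, hn1, hnM⟩
      simp only [hF, Finset.coe_filter, Finset.mem_range, Set.mem_setOf_eq]
      refine ⟨Nat.lt_succ_of_le hnM, le_trans ?_ hng⟩
      have hKK : Kf n ≤ Kf M := hKmono n M hnM
      have h1 : ((Kf n : ℝ)+1) ≤ ((Kf M : ℝ)+1) := by
        have : (Kf n : ℝ) ≤ Kf M := by exact_mod_cast hKK
        linarith
      exact one_div_le_one_div_of_le (by positivity) h1
    have hcard : (Nat.card ↑({n | Nk 0 ≤ n ∧ 1/((Kf n : ℝ)+1) ≤ g n} ∩ Set.Icc 1 M) : ℝ)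
        ≤ (F.card : ℝ) := by
      rw [Nat.card_coe_set_eq]
      have := Set.ncard_le_ncard hsubset (Finset.finite_toSet F)
      rw [Set.ncard_coe_finset] at this
      exact_mod_cast this
    have hεK : (0:ℝ) < 1/((Kf M : ℝ)+1) := by positivity
    have hFL : (F.card : ℝ) * (1/((Kf M : ℝ)+1)) ≤ L M := hcount _ hεK M
    have hKMpos : (0:ℝ) < (Kf M : ℝ) + 1 := by positivity
    have hFcard : (F.card : ℝ) ≤ ((Kf M : ℝ)+1) * L M := by
      rw [← le_div_iff₀ hεK] at hFL
      calc (F.card : ℝ) ≤ L M / (1/((Kf M : ℝ)+1)) := hFL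
        _ = ((Kf M : ℝ)+1) * L M := by field_simp
    -- now bound
    have hLM : L M / M < 1/((Kf M : ℝ)+1)^2 := hP (Kf M) M (hKle M hM0)
    have hkK : k ≤ Kf M := hKge k M hM
    have hfinal : (Nat.card ↑({n | Nk 0 ≤ n ∧ 1/((Kf n : ℝ)+1) ≤ g n} ∩ Set.Icc 1 M) : ℝ) / M
        < ε := by
      have step1 : (Nat.card ↑({n | Nk 0 ≤ n ∧ 1/((Kf n : ℝ)+1) ≤ g n} ∩ Set.Icc 1 M) : ℝ) / M
          ≤ ((Kf M : ℝ)+1) * L M / M :=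
        div_le_div_of_nonneg_right (le_trans hcard hFcard) hMpos.le
      have step2 : ((Kf M : ℝ)+1) * L M / M < ((Kf M : ℝ)+1) * (1/((Kf M : ℝ)+1)^2) := by
        rw [mul_div_assoc]
        exact mul_lt_mul_of_pos_left hLM hKMpos
      have step3 : ((Kf M : ℝ)+1) * (1/((Kf M : ℝ)+1)^2) = 1/((Kf M : ℝ)+1) := by
        field_simp
      have step4 : 1/((Kf M : ℝ)+1) ≤ 1/((k:ℝ)+1) := by
        have : ((k:ℝ)+1) ≤ ((Kf M : ℝ)+1) := by
          have : (k:ℝ) ≤ Kf M := by exact_mod_cast hkK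
          linarith
        exact one_div_le_one_div_of_le (by positivity) this
      calc _ ≤ ((Kf M : ℝ)+1) * L M / M := step1
        _ < ((Kf M : ℝ)+1) * (1/((Kf M : ℝ)+1)^2) := step2
        _ = 1/((Kf M : ℝ)+1) := step3
        _ ≤ 1/((k:ℝ)+1) := step4
        _ < ε := hk
    rw [Real.dist_eq, sub_zero, abs_of_nonneg (by positivity)]
    exact hfinal
  · -- ratio tends to 1 off R
    intro ε hε
    have hlogpos : 0 < Real.log (1+ε) := Real.log_pos (by linarith)
    obtain ⟨k, hk⟩ := exists_nat_one_div_lt hlogpos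
    refine ⟨Nk k, fun n hn hnR => ?_⟩
    have hn0 : Nk 0 ≤ n := le_trans (hNkmono.monotone (Nat.zero_le k)) hn
    have hng : g n < 1/((Kf n : ℝ)+1) := by
      by_contra h
      exact hnR ⟨hn0, le_of_not_gt h⟩
    have hkK : k ≤ Kf n := hKge k n hn
    have hbound : g n < Real.log (1+ε) := by
      have h1 : 1/((Kf n : ℝ)+1) ≤ 1/((k:ℝ)+1) := by
        have : ((k:ℝ)+1) ≤ ((Kf n : ℝ)+1) := by
          have : (k:ℝ) ≤ Kf n := by exact_mod_cast hkK
          linarith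
        exact one_div_le_one_div_of_le (by positivity) this
      exact (hng.trans_le h1).trans hk
    have hglog : g n = Real.log (a (n+1) / a n) := by
      rw [Real.log_div (ne_of_gt (hpos (n+1))) (ne_of_gt (hpos n))]
    have hrpos : 0 < a (n+1) / a n := div_pos (hpos (n+1)) (hpos n)
    have hrlt : a (n+1) / a n < 1 + ε := by
      have := hbound
      rw [hglog] at this
      exact (Real.log_lt_log_iff hrpos (by linarith)).1 this
    have hrgt : 1 < a (n+1) / a n :=
      (one_lt_div (hpos n)).2 (hmono (Nat.lt_succ_self n))
    rw [abs_lt]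
    constructor <;> linarith
end

section
/- Let A ⊆ ℝ^d, let o be a point of the closure of A satisfying the sequence selection property (SSP), and let h : ℝ^d → ℝ^d be a bi-Lipschitz homeomorphism with h(o) = o. Then there exists a bi-Lipschitz homeomorphism h̄ of ℝ^d such that h̄(LD(A)) ⊆ LD(h(A)), where LD denotes the cone over the set of asymptotic directions at o. -/
open Filter

noncomputable section

/-- The sequence selection property (SSP) at `o ∈ closure A`. -/
def SSP {d : ℕ} (A : Set (EuclideanSpace ℝ (Fin d))) (o : EuclideanSpace ℝ (Fin d)) : Prop :=
  ∀ u ∈ asymDirs A o, ∀ t : ℕ → ℝ, (∀ n, 0 < t n) → Antitone t →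
    Tendsto t atTop (nhds 0) →
    ∃ a : ℕ → EuclideanSpace ℝ (Fin d), (∀ n, a n ∈ A) ∧
      Tendsto (fun n => ‖(a n - o) - t n • u‖ / max ‖a n - o‖ (t n)) atTop (nhds 0)

/-- Extract a genuine subsequence from convergence along the hyperfilter. -/
lemma aux_tendsto_subseq {α : Type*} [TopologicalSpace α]
    [FirstCountableTopology α]
    (g : ℕ → α) (v : α) (hg : Tendsto g ((hyperfilter ℕ : Ultrafilter ℕ) : Filter ℕ) (nhds v)) :
    ∃ φ : ℕ → ℕ, StrictMono φ ∧ Tendsto (g ∘ φ) atTop (nhds v) := by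
  apply TopologicalSpace.FirstCountableTopology.tendsto_subseq
  have h1 : map g ((hyperfilter ℕ : Ultrafilter ℕ) : Filter ℕ) ≤ nhds v ⊓ map g atTop :=
    le_inf hg (map_mono Nat.hyperfilter_le_atTop)
  exact Filter.neBot_of_le h1

lemma aux_dir_smul {E' : Type*} [NormedAddCommGroup E'] [NormedSpace ℝ E'] {r : ℝ}
    (hr : 0 < r) (w : E') : ‖r • w‖⁻¹ • (r • w) = ‖w‖⁻¹ • w := by
  rcases eq_or_ne w 0 with rfl | hw
  · simp
  · rw [norm_smul, Real.norm_eq_abs, abs_of_pos hr, mul_inv, smul_smul,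
      mul_comm r⁻¹ ‖w‖⁻¹, mul_assoc, inv_mul_cancel₀ hr.ne', mul_one]

set_option maxHeartbeats 1000000 in
/-- If `o ∈ closure A` satisfies (SSP) and `h` is a bi-Lipschitz homeomorphism fixing `o`,
then some bi-Lipschitz homeomorphism `h̄` maps the cone of `A` at `o` into the cone of
`h(A)` at `o`. -/
theorem cone_into_cone {d : ℕ} (A : Set (EuclideanSpace ℝ (Fin d)))
    (o : EuclideanSpace ℝ (Fin d)) (ho : o ∈ closure A) (hssp : SSP A o)
    (h : EuclideanSpace ℝ (Fin d) → EuclideanSpace ℝ (Fin d))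
    (hsurj : Function.Surjective h) (L : ℝ) (hL : 0 < L) (hbl : BiLip L h)
    (hfix : h o = o) :
    ∃ hbar : EuclideanSpace ℝ (Fin d) → EuclideanSpace ℝ (Fin d),
      Function.Surjective hbar ∧ (∃ L' > 0, BiLip L' hbar) ∧
      hbar '' cone A o ⊆ cone (h '' A) o := by
  classical
  set U : Filter ℕ := ((hyperfilter ℕ : Ultrafilter ℕ) : Filter ℕ) with hUdef
  have hUne : U.NeBot := Ultrafilter.neBot _
  have hUle : U ≤ atTop := Nat.hyperfilter_le_atTop
  set t : ℕ → ℝ := fun n => ((n : ℝ) + 1)⁻¹ with ht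
  have htpos : ∀ n, 0 < t n := fun n => by positivity
  have htne : ∀ n, t n ≠ 0 := fun n => (htpos n).ne'
  have htanti : Antitone t := by
    intro m n hmn
    have : ((m : ℝ) + 1) ≤ ((n : ℝ) + 1) := by exact_mod_cast Nat.succ_le_succ hmn
    exact inv_anti₀ (by positivity) this
  have htlim : Tendsto t atTop (nhds 0) := by
    simpa [ht, one_div] using (tendsto_one_div_add_atTop_nhds_zero_nat : Tendsto (fun n : ℕ => 1 / ((n : ℝ) + 1)) atTop (nhds 0))
  set f : ℕ → (EuclideanSpace ℝ (Fin d)) → (EuclideanSpace ℝ (Fin d)) :=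
    fun n x => (t n)⁻¹ • (h (o + t n • x) - o) with hfdef
  -- bi-Lipschitz bounds for f n
  have flip : ∀ n (x y : EuclideanSpace ℝ (Fin d)), (1 / L) * ‖x - y‖ ≤ ‖f n x - f n y‖ ∧
      ‖f n x - f n y‖ ≤ L * ‖x - y‖ := by
    intro n x y
    have h1 : f n x - f n y = (t n)⁻¹ • (h (o + t n • x) - h (o + t n • y)) := by
      simp only [hfdef, ← smul_sub]
      congr 1
      abel
    have h2 : ‖f n x - f n y‖ = (t n)⁻¹ * ‖h (o + t n • x) - h (o + t n • y)‖ := by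
      rw [h1, norm_smul, Real.norm_eq_abs, abs_of_pos (inv_pos.2 (htpos n))]
    have h3 : ‖(o + t n • x) - (o + t n • y)‖ = t n * ‖x - y‖ := by
      have e : (o + t n • x) - (o + t n • y) = t n • (x - y) := by
        rw [smul_sub]; abel
      rw [e, norm_smul, Real.norm_eq_abs, abs_of_pos (htpos n)]
    obtain ⟨hlo, hhi⟩ := hbl (o + t n • x) (o + t n • y)
    rw [h3] at hlo hhi
    constructor
    · have e : (1 / L) * ‖x - y‖ = (t n)⁻¹ * ((1 / L) * (t n * ‖x - y‖)) := by
        field_simp [htne n]; try ring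
      rw [e, h2]
      exact mul_le_mul_of_nonneg_left hlo (inv_pos.2 (htpos n)).le
    · have e : L * ‖x - y‖ = (t n)⁻¹ * (L * (t n * ‖x - y‖)) := by
        field_simp [htne n]; try ring
      rw [e, h2]
      exact mul_le_mul_of_nonneg_left hhi (inv_pos.2 (htpos n)).le
  have f0 : ∀ n, f n (0 : EuclideanSpace ℝ (Fin d)) = 0 := by
    intro n
    simp only [hfdef]
    rw [smul_zero, add_zero, hfix, sub_self, smul_zero]
  have fsurj : ∀ n, Function.Surjective (f n) := by
    intro n y
    obtain ⟨z, hz⟩ := hsurj (o + t n • y)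
    refine ⟨(t n)⁻¹ • (z - o), ?_⟩
    simp only [hfdef]
    rw [smul_smul, mul_inv_cancel₀ (htne n), one_smul,
      show o + (z - o) = z by abel, hz,
      show o + t n • y - o = t n • y by abel, smul_smul,
      inv_mul_cancel₀ (htne n), one_smul]
  have fbound : ∀ n (x : EuclideanSpace ℝ (Fin d)), ‖f n x‖ ≤ L * ‖x‖ := by
    intro n x
    have := (flip n x 0).2
    simpa [f0 n] using this
  -- ultrafilter limits exist
  have key : ∀ x : EuclideanSpace ℝ (Fin d), ∃ v : EuclideanSpace ℝ (Fin d), Tendsto (fun n => f n x) U (nhds v) := by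
    intro x
    have hc : IsCompact (Metric.closedBall (0 : EuclideanSpace ℝ (Fin d)) (L * ‖x‖)) := isCompact_closedBall _ _
    have hp : ↑((hyperfilter ℕ).map (fun n => f n x)) ≤
        Filter.principal (Metric.closedBall (0 : EuclideanSpace ℝ (Fin d)) (L * ‖x‖)) := by
      rw [Ultrafilter.coe_map, le_principal_iff, Filter.mem_map]
      exact Filter.univ_mem' fun n => by
        simpa [Metric.mem_closedBall, dist_eq_norm] using fbound n x
    obtain ⟨v, _, hle⟩ := hc.ultrafilter_le_nhds ((hyperfilter ℕ).map (fun n => f n x)) hp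
    exact ⟨v, by rwa [Ultrafilter.coe_map] at hle⟩
  choose hbar hhbar using key
  have hbar0 : hbar 0 = 0 := by
    refine tendsto_nhds_unique (hhbar 0) ?_
    simpa [f0] using (tendsto_const_nhds : Tendsto (fun _ : ℕ => (0 : EuclideanSpace ℝ (Fin d))) U (nhds 0))
  have hbarlip : BiLip L hbar := by
    intro x y
    have h1 : Tendsto (fun n => ‖f n x - f n y‖) U (nhds ‖hbar x - hbar y‖) :=
      ((hhbar x).sub (hhbar y)).norm
    exact ⟨ge_of_tendsto h1 (Filter.Eventually.of_forall fun n => (flip n x y).1),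
      le_of_tendsto h1 (Filter.Eventually.of_forall fun n => (flip n x y).2)⟩
  have hbarsurj : Function.Surjective hbar := by
    intro y
    choose x hx using fun n => fsurj n y
    have hxb : ∀ n, x n ∈ Metric.closedBall (0 : EuclideanSpace ℝ (Fin d)) (L * ‖y‖) := by
      intro n
      have h1 := (flip n (x n) 0).1
      rw [hx n, f0 n, sub_zero, sub_zero] at h1
      have h2 : ‖x n‖ = L * ((1 / L) * ‖x n‖) := by field_simp
      have h3 : ‖x n‖ ≤ L * ‖y‖ := by
        rw [h2]; exact mul_le_mul_of_nonneg_left h1 hL.le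
      simpa [Metric.mem_closedBall, dist_eq_norm] using h3
    obtain ⟨xx, _, hxxle⟩ := (isCompact_closedBall (0 : EuclideanSpace ℝ (Fin d)) (L * ‖y‖)).ultrafilter_le_nhds
      ((hyperfilter ℕ).map x)
      (by rw [Ultrafilter.coe_map, le_principal_iff, Filter.mem_map]
          exact Filter.univ_mem' hxb)
    rw [Ultrafilter.coe_map] at hxxle
    have hxt : Tendsto x U (nhds xx) := hxxle
    refine ⟨xx, ?_⟩
    have h2 : Tendsto (fun n => f n xx) U (nhds y) := by
      rw [tendsto_iff_dist_tendsto_zero]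
      have hd : ∀ n, dist (f n xx) y ≤ L * dist xx (x n) := by
        intro n
        rw [dist_eq_norm, dist_eq_norm, ← hx n]
        exact (flip n xx (x n)).2
      have h3 : Tendsto (fun n => L * dist xx (x n)) U (nhds 0) := by
        have h4 : Tendsto (fun n => dist xx (x n)) U (nhds 0) := by
          simpa [dist_comm] using (tendsto_iff_dist_tendsto_zero.1 hxt)
        simpa using h4.const_mul L
      exact squeeze_zero (fun n => dist_nonneg) hd h3
    exact tendsto_nhds_unique (hhbar xx) h2
  -- main geometric step
  have main : ∀ u ∈ asymDirs A o, ∀ s : ℝ, 0 < s → hbar (s • u) ∈ cone (h '' A) o := by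
    intro u hu s hs
    set v := hbar (s • u) with hvdef
    have hvnorm : (1 / L) * s ≤ ‖v‖ := by
      have h1 := (hbarlip (s • u) 0).1
      rw [hbar0, sub_zero, sub_zero] at h1
      rwa [norm_smul, Real.norm_eq_abs, abs_of_pos hs, hu.1, mul_one] at h1
    have hvne : v ≠ 0 := by
      intro h0
      rw [h0, norm_zero] at hvnorm
      have : 0 < (1 / L) * s := by positivity
      linarith
    -- apply SSP along the sequence s * t n
    have hs'pos : ∀ n, 0 < s * t n := fun n => mul_pos hs (htpos n)
    obtain ⟨a, haA, hratio⟩ := hssp u hu (fun n => s * t n) hs'pos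
      (fun m n hmn => mul_le_mul_of_nonneg_left (htanti hmn) hs.le)
      (by simpa using htlim.const_mul s)
    set s' : ℕ → ℝ := fun n => s * t n with hs'def
    set ε : ℕ → ℝ := fun n => ‖(a n - o) - s' n • u‖ / max ‖a n - o‖ (s' n) with hεdef
    have hmaxpos : ∀ n, 0 < max ‖a n - o‖ (s' n) := fun n => lt_max_of_lt_right (hs'pos n)
    have hεnn : ∀ n, 0 ≤ ε n := fun n => div_nonneg (norm_nonneg _) (hmaxpos n).le
    have hkey : ∀ n, ‖(a n - o) - s' n • u‖ = ε n * max ‖a n - o‖ (s' n) := fun n =>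
      (div_mul_cancel₀ _ (hmaxpos n).ne').symm
    have hnu : ∀ n, ‖s' n • u‖ = s' n := by
      intro n; rw [norm_smul, Real.norm_eq_abs, abs_of_pos (hs'pos n), hu.1, mul_one]
    have hmax2 : ∀ᶠ n in atTop, max ‖a n - o‖ (s' n) ≤ 2 * s' n := by
      have hev : ∀ᶠ n in atTop, ε n < 1 / 2 :=
        hratio.eventually (gt_mem_nhds (by norm_num : (0:ℝ) < 1 / 2))
      filter_upwards [hev] with n hn
      rcases le_or_gt ‖a n - o‖ (s' n) with hc | hc
      · have hsp : 0 < s' n := hs'pos n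
        rw [max_eq_right hc]; linarith
      · have hsp : 0 < s' n := hs'pos n
        rw [max_eq_left hc.le]
        have h1 : ‖a n - o‖ - ‖s' n • u‖ ≤ ‖(a n - o) - s' n • u‖ := norm_sub_norm_le _ _
        rw [hnu n, hkey n, max_eq_left hc.le] at h1
        have hprod : 0 ≤ (1 / 2 - ε n) * ‖a n - o‖ :=
          mul_nonneg (by linarith) (norm_nonneg _)
        nlinarith [h1, hprod]
    set b : ℕ → EuclideanSpace ℝ (Fin d) := fun n => h (a n) with hbdef
    set c : ℕ → EuclideanSpace ℝ (Fin d) := fun n => (t n)⁻¹ • (b n - o) with hcdef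
    have e0 : ∀ n, o + t n • (s • u) = o + s' n • u := by
      intro n
      rw [smul_smul, mul_comm]
    have herr : ∀ n, ‖c n - f n (s • u)‖ ≤ (t n)⁻¹ * (L * ‖(a n - o) - s' n • u‖) := by
      intro n
      have e1 : c n - f n (s • u) = (t n)⁻¹ • (h (a n) - h (o + s' n • u)) := by
        simp only [hcdef, hfdef, hbdef, e0 n, ← smul_sub]
        congr 1
        abel
      have e2 : a n - (o + s' n • u) = (a n - o) - s' n • u := by abel
      rw [e1, norm_smul, Real.norm_eq_abs, abs_of_pos (inv_pos.2 (htpos n))]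
      refine mul_le_mul_of_nonneg_left ?_ (inv_pos.2 (htpos n)).le
      have := (hbl (a n) (o + s' n • u)).2
      rwa [e2] at this
    have herr2 : ∀ᶠ n in atTop, ‖c n - f n (s • u)‖ ≤ (2 * L * s) * ε n := by
      filter_upwards [hmax2] with n hn
      refine (herr n).trans ?_
      have h1 : ‖(a n - o) - s' n • u‖ ≤ ε n * (2 * s' n) := by
        rw [hkey n]
        exact mul_le_mul_of_nonneg_left hn (hεnn n)
      have h2 : (t n)⁻¹ * (L * ‖(a n - o) - s' n • u‖) ≤
          (t n)⁻¹ * (L * (ε n * (2 * s' n))) := by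
        refine mul_le_mul_of_nonneg_left ?_ (inv_pos.2 (htpos n)).le
        exact mul_le_mul_of_nonneg_left h1 hL.le
      refine h2.trans (le_of_eq ?_)
      have : s' n = s * t n := rfl
      rw [this]
      field_simp [htne n]
      try ring
    have hczero : Tendsto (fun n => c n - f n (s • u)) atTop (nhds 0) := by
      rw [tendsto_zero_iff_norm_tendsto_zero]
      refine squeeze_zero' (Filter.Eventually.of_forall fun n => norm_nonneg _) herr2 ?_
      simpa using hratio.const_mul (2 * L * s)
    have hcv : Tendsto c U (nhds v) := by
      have h2 := (hczero.mono_left hUle).add (hhbar (s • u))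
      simpa using h2
    have hbo : Tendsto b atTop (nhds o) := by
      rw [tendsto_iff_dist_tendsto_zero]
      refine squeeze_zero' (g := fun n => (L * (2 * s)) * t n)
        (Filter.Eventually.of_forall fun n => dist_nonneg) ?_ ?_
      · filter_upwards [hmax2] with n hn
        have h1 : dist (b n) o ≤ L * ‖a n - o‖ := by
          rw [dist_eq_norm]
          have := (hbl (a n) o).2
          rwa [hfix] at this
        have h2 : ‖a n - o‖ ≤ 2 * s' n := le_trans (le_max_left _ _) hn
        calc dist (b n) o ≤ L * ‖a n - o‖ := h1
          _ ≤ L * (2 * s' n) := mul_le_mul_of_nonneg_left h2 hL.le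
          _ = (L * (2 * s)) * t n := by show L * (2 * (s * t n)) = _; ring
      · simpa using htlim.const_mul (L * (2 * s))
    set g : ℕ → EuclideanSpace ℝ (Fin d) :=
      fun n => if b n = o then 0 else ‖b n - o‖⁻¹ • (b n - o) with hgdef
    have hgU : Tendsto g U (nhds (‖v‖⁻¹ • v)) := by
      have hcont : ContinuousAt (fun w : EuclideanSpace ℝ (Fin d) => ‖w‖⁻¹ • w) v :=
        ((continuous_norm.continuousAt).inv₀ (norm_ne_zero_iff.2 hvne)).smul continuousAt_id
      have h1 : Tendsto (fun n => ‖c n‖⁻¹ • c n) U (nhds (‖v‖⁻¹ • v)) :=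
        (hcont.tendsto).comp hcv
      refine h1.congr' ?_
      filter_upwards [hcv.eventually_ne hvne] with n hn
      have hbn : b n ≠ o := by
        intro hh
        apply hn
        simp [hcdef, hh]
      rw [hgdef]
      simp only [if_neg hbn]
      have hc' : c n = (t n)⁻¹ • (b n - o) := rfl
      rw [hc', aux_dir_smul (inv_pos.2 (htpos n))]
    obtain ⟨φ, hφmono, hgφ⟩ := aux_tendsto_subseq g (‖v‖⁻¹ • v) hgU
    have hv'ne : (‖v‖⁻¹ • v) ≠ 0 :=
      smul_ne_zero (inv_ne_zero (norm_ne_zero_iff.2 hvne)) hvne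
    have hev2 : ∀ᶠ k in atTop, (g ∘ φ) k ≠ 0 := hgφ.eventually_ne hv'ne
    rw [eventually_atTop] at hev2
    obtain ⟨N, hN⟩ := hev2
    have hbne : ∀ k, b (φ (k + N)) ≠ o := by
      intro k hh
      apply hN (k + N) (Nat.le_add_left N k)
      simp only [Function.comp, hgdef, if_pos hh]
    refine ⟨‖v‖, norm_nonneg v, ‖v‖⁻¹ • v, ⟨?_, fun k => b (φ (k + N)),
      fun k => ⟨a (φ (k + N)), haA _, rfl⟩, hbne, ?_, ?_⟩, ?_⟩
    · rw [norm_smul, Real.norm_eq_abs, abs_of_pos (inv_pos.2 (norm_pos_iff.2 hvne)),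
        inv_mul_cancel₀ (norm_ne_zero_iff.2 hvne)]
    · exact hbo.comp ((hφmono.tendsto_atTop).comp (tendsto_add_atTop_nat N))
    · have h3 := hgφ.comp (tendsto_add_atTop_nat N)
      refine h3.congr ?_
      intro k
      simp only [Function.comp, hgdef, if_neg (hbne k)]
    · rw [smul_smul, mul_inv_cancel₀ (norm_ne_zero_iff.2 hvne), one_smul]
  refine ⟨hbar, hbarsurj, ⟨L, hL, hbarlip⟩, ?_⟩
  rintro - ⟨w, ⟨s, hs0, u, hu, rfl⟩, rfl⟩
  rcases eq_or_lt_of_le hs0 with hs | hs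
  · obtain ⟨t0, -, v', hv', -⟩ := main u hu 1 one_pos
    exact ⟨0, le_refl 0, v', hv', by rw [← hs, zero_smul, hbar0, zero_smul]⟩
  · exact main u hu s hs
end
end

section
/- Let A ⊆ ℝ^d, let o be a point of the closure of A satisfying the sequence selection property (SSP), and let h : ℝ^d → ℝ^d be a bi-Lipschitz homeomorphism with h(o) = o. Then the Hausdorff dimension of LD(A) is at most the Hausdorff dimension of LD(h(A)), where LD denotes the cone over the set of asymptotic directions at o. -/
open Filter

noncomputable section

/-- Normalization commutes with positive scaling. -/
lemma normalize_smul_pos {E : Type*} [NormedAddCommGroup E] [NormedSpace ℝ E]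
    {r : ℝ} (hr : 0 < r) (x : E) : ‖r • x‖⁻¹ • (r • x) = ‖x‖⁻¹ • x := by
  rw [norm_smul, Real.norm_eq_abs, abs_of_pos hr, mul_inv, smul_smul,
    mul_comm r⁻¹ ‖x‖⁻¹, mul_assoc, inv_mul_cancel₀ hr.ne', mul_one]

set_option maxHeartbeats 2000000 in
/-- If `o ∈ closure A` satisfies (SSP) and `h` is a bi-Lipschitz homeomorphism fixing `o`,
then the Hausdorff dimension of the cone of `A` at `o` is at most that of the cone of
`h(A)` at `o`. -/
theorem dimH_cone_le {d : ℕ} (A : Set (EuclideanSpace ℝ (Fin d)))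
    (o : EuclideanSpace ℝ (Fin d)) (ho : o ∈ closure A) (hssp : SSP A o)
    (h : EuclideanSpace ℝ (Fin d) → EuclideanSpace ℝ (Fin d))
    (hsurj : Function.Surjective h) (L : ℝ) (hL : 0 < L) (hbl : BiLip L h)
    (hfix : h o = o) :
    dimH (cone A o) ≤ dimH (cone (h '' A) o) := by
  classical
  set 𝒰 : Ultrafilter ℕ := Filter.hyperfilter ℕ with h𝒰def
  have h𝒰 : (𝒰 : Filter ℕ) ≤ atTop := by
    rw [← Nat.cofinite_eq_atTop]; exact Filter.hyperfilter_le_cofinite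
  have hnpos : ∀ n : ℕ, (0:ℝ) < (n:ℝ) + 1 := fun n => by positivity
  set g : ℕ → EuclideanSpace ℝ (Fin d) → EuclideanSpace ℝ (Fin d) := fun n x => ((n:ℝ)+1) • (h (o + ((n:ℝ)+1)⁻¹ • x) - o) with hgdef
  -- bi-Lipschitz bounds for g n
  have hgsub : ∀ (n : ℕ) (x y : EuclideanSpace ℝ (Fin d)), g n x - g n y
      = ((n:ℝ)+1) • (h (o + ((n:ℝ)+1)⁻¹ • x) - h (o + ((n:ℝ)+1)⁻¹ • y)) := by
    intro n x y
    simp only [hgdef, smul_sub]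
    abel
  have hargdiff : ∀ (n : ℕ) (x y : EuclideanSpace ℝ (Fin d)),
      ‖(o + ((n:ℝ)+1)⁻¹ • x) - (o + ((n:ℝ)+1)⁻¹ • y)‖ = ((n:ℝ)+1)⁻¹ * ‖x - y‖ := by
    intro n x y
    have : (o + ((n:ℝ)+1)⁻¹ • x) - (o + ((n:ℝ)+1)⁻¹ • y) = ((n:ℝ)+1)⁻¹ • (x - y) := by
      rw [smul_sub]; abel
    rw [this, norm_smul, Real.norm_eq_abs, abs_of_pos (inv_pos.2 (hnpos n))]
  have hgnorm : ∀ (n : ℕ) (x y : EuclideanSpace ℝ (Fin d)),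
      ‖g n x - g n y‖ = ((n:ℝ)+1) * ‖h (o + ((n:ℝ)+1)⁻¹ • x) - h (o + ((n:ℝ)+1)⁻¹ • y)‖ := by
    intro n x y
    rw [hgsub, norm_smul, Real.norm_eq_abs, abs_of_pos (hnpos n)]
  have hgup : ∀ (n : ℕ) (x y : EuclideanSpace ℝ (Fin d)), ‖g n x - g n y‖ ≤ L * ‖x - y‖ := by
    intro n x y
    rw [hgnorm]
    have h1 := (hbl (o + ((n:ℝ)+1)⁻¹ • x) (o + ((n:ℝ)+1)⁻¹ • y)).2
    rw [hargdiff] at h1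
    calc ((n:ℝ)+1) * ‖h (o + ((n:ℝ)+1)⁻¹ • x) - h (o + ((n:ℝ)+1)⁻¹ • y)‖
        ≤ ((n:ℝ)+1) * (L * (((n:ℝ)+1)⁻¹ * ‖x - y‖)) := by
          exact mul_le_mul_of_nonneg_left h1 (hnpos n).le
      _ = L * ‖x - y‖ := by field_simp
  have hglow : ∀ (n : ℕ) (x y : EuclideanSpace ℝ (Fin d)), (1/L) * ‖x - y‖ ≤ ‖g n x - g n y‖ := by
    intro n x y
    rw [hgnorm]
    have h1 := (hbl (o + ((n:ℝ)+1)⁻¹ • x) (o + ((n:ℝ)+1)⁻¹ • y)).1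
    rw [hargdiff] at h1
    calc (1/L) * ‖x - y‖ = ((n:ℝ)+1) * ((1/L) * (((n:ℝ)+1)⁻¹ * ‖x - y‖)) := by
          field_simp
      _ ≤ ((n:ℝ)+1) * ‖h (o + ((n:ℝ)+1)⁻¹ • x) - h (o + ((n:ℝ)+1)⁻¹ • y)‖ :=
          mul_le_mul_of_nonneg_left h1 (hnpos n).le
  have hg0 : ∀ n, g n 0 = 0 := by
    intro n
    simp [hgdef, hfix]
  -- the blow-up limit f along the ultrafilter
  have hex : ∀ x : EuclideanSpace ℝ (Fin d), ∃ y : EuclideanSpace ℝ (Fin d), Tendsto (fun n => g n x) (𝒰 : Filter ℕ) (nhds y) := by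
    intro x
    have hb : ∀ n, g n x ∈ Metric.closedBall (0:EuclideanSpace ℝ (Fin d)) (L * ‖x‖) := by
      intro n
      rw [Metric.mem_closedBall, dist_zero_right]
      have := hgup n x 0
      rwa [hg0, sub_zero, sub_zero] at this
    have hmem : Metric.closedBall (0:EuclideanSpace ℝ (Fin d)) (L * ‖x‖) ∈ 𝒰.map (fun n => g n x) := by
      exact Filter.mem_map.2 (Filter.univ_mem' hb)
    obtain ⟨y, -, hy⟩ := (isCompact_closedBall (0:EuclideanSpace ℝ (Fin d)) (L * ‖x‖)).ultrafilter_le_nhds'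
      (𝒰.map (fun n => g n x)) hmem
    exact ⟨y, hy⟩
  set f : EuclideanSpace ℝ (Fin d) → EuclideanSpace ℝ (Fin d) := fun x => (hex x).choose with hfdef
  have hf : ∀ x, Tendsto (fun n => g n x) (𝒰 : Filter ℕ) (nhds (f x)) :=
    fun x => (hex x).choose_spec
  have hf0 : f 0 = 0 := by
    refine tendsto_nhds_unique (hf 0) ?_
    simpa [hg0] using (tendsto_const_nhds : Tendsto (fun _ : ℕ => (0:EuclideanSpace ℝ (Fin d))) 𝒰 (nhds 0))
  have hfnormdiff : ∀ x y : EuclideanSpace ℝ (Fin d),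
      Tendsto (fun n => ‖g n x - g n y‖) (𝒰 : Filter ℕ) (nhds ‖f x - f y‖) :=
    fun x y => ((hf x).sub (hf y)).norm
  have hfup : ∀ x y : EuclideanSpace ℝ (Fin d), ‖f x - f y‖ ≤ L * ‖x - y‖ := fun x y =>
    le_of_tendsto (hfnormdiff x y) (Filter.Eventually.of_forall fun n => hgup n x y)
  have hflow : ∀ x y : EuclideanSpace ℝ (Fin d), (1/L) * ‖x - y‖ ≤ ‖f x - f y‖ := fun x y =>
    ge_of_tendsto (hfnormdiff x y) (Filter.Eventually.of_forall fun n => hglow n x y)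
  have hanti : AntilipschitzWith (⟨L, hL.le⟩ : NNReal) f := by
    refine AntilipschitzWith.of_le_mul_dist fun x y => ?_
    have := hflow x y
    rw [dist_eq_norm, dist_eq_norm]
    have hL' : (1/L) * ‖x - y‖ * L ≤ ‖f x - f y‖ * L :=
      mul_le_mul_of_nonneg_right this hL.le
    calc ‖x - y‖ = (1/L) * ‖x - y‖ * L := by field_simp
      _ ≤ ‖f x - f y‖ * L := hL'
      _ = (⟨L, hL.le⟩ : NNReal) * ‖f x - f y‖ := by push_cast; ring
  -- main claim
  have claim : ∀ u ∈ asymDirs A o, ∀ t : ℝ, 0 < t →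
      ∃ v ∈ asymDirs (h '' A) o, f (t • u) = ‖f (t • u)‖ • v := by
    intro u hu t htpos
    have hunorm : ‖u‖ = 1 := hu.1
    set s : ℕ → ℝ := fun n => t / ((n:ℝ)+1) with hsdef
    have hspos : ∀ n, 0 < s n := fun n => div_pos htpos (hnpos n)
    have hsanti : Antitone s := by
      intro m n hmn
      apply div_le_div_of_nonneg_left htpos.le (hnpos m)
      have : (m:ℝ) ≤ (n:ℝ) := Nat.cast_le.2 hmn
      linarith
    have hs0 : Tendsto s atTop (nhds 0) := by
      apply Tendsto.div_atTop (tendsto_const_nhds : Tendsto (fun _ : ℕ => t) atTop (nhds t))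
      exact tendsto_atTop_add_const_right _ _ tendsto_natCast_atTop_atTop
    obtain ⟨a, haA, herr⟩ := hssp u hu s hspos hsanti hs0
    set ε : ℕ → ℝ := fun n => ‖(a n - o) - s n • u‖ / max ‖a n - o‖ (s n) with hεdef
    have hmaxpos : ∀ n, 0 < max ‖a n - o‖ (s n) := fun n =>
      lt_max_of_lt_right (hspos n)
    have hεnn : ∀ n, 0 ≤ ε n := fun n => div_nonneg (norm_nonneg _) (hmaxpos n).le
    have heq : ∀ n, ‖(a n - o) - s n • u‖ = ε n * max ‖a n - o‖ (s n) := fun n =>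
      (div_mul_cancel₀ _ (hmaxpos n).ne').symm
    have hbound : ∀ᶠ n in atTop, ‖(a n - o) - s n • u‖ ≤ 2 * ε n * s n := by
      have hsmall : ∀ᶠ n in atTop, ε n < 1/2 :=
        herr.eventually_lt_const (by norm_num)
      filter_upwards [hsmall] with n hn
      have h1 : ‖a n - o‖ ≤ ε n * max ‖a n - o‖ (s n) + s n := by
        calc ‖a n - o‖ = ‖((a n - o) - s n • u) + s n • u‖ := by
              congr 1; abel
          _ ≤ ‖(a n - o) - s n • u‖ + ‖s n • u‖ := norm_add_le _ _
          _ = ε n * max ‖a n - o‖ (s n) + s n := by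
              rw [heq n, norm_smul, Real.norm_eq_abs, abs_of_pos (hspos n), hunorm, mul_one]
      have h2 : max ‖a n - o‖ (s n) ≤ ε n * max ‖a n - o‖ (s n) + s n := by
        apply max_le h1
        nlinarith [hεnn n, hmaxpos n]
      have hM2 : max ‖a n - o‖ (s n) ≤ 2 * s n := by
        nlinarith [mul_pos (show (0:ℝ) < 1/2 - ε n by linarith) (hmaxpos n)]
      calc ‖(a n - o) - s n • u‖ = ε n * max ‖a n - o‖ (s n) := heq n
        _ ≤ ε n * (2 * s n) := mul_le_mul_of_nonneg_left hM2 (hεnn n)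
        _ = 2 * ε n * s n := by ring
    set c : ℕ → EuclideanSpace ℝ (Fin d) := fun n => (s n)⁻¹ • (h (a n) - o) with hcdef
    set w : ℕ → EuclideanSpace ℝ (Fin d) := fun n => (s n)⁻¹ • (h (o + s n • u) - o) with hwdef
    have harg : ∀ n : ℕ, ((n:ℝ)+1)⁻¹ • (t • u) = s n • u := by
      intro n
      rw [smul_smul]
      congr 1
      rw [hsdef]
      simp only
      rw [div_eq_mul_inv, mul_comm]
    have hcoef : ∀ n : ℕ, (s n)⁻¹ = t⁻¹ * ((n:ℝ)+1) := by
      intro n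
      rw [hsdef]
      simp only
      rw [inv_div, div_eq_inv_mul]
    have hwg : ∀ n, w n = t⁻¹ • g n (t • u) := by
      intro n
      show (s n)⁻¹ • (h (o + s n • u) - o)
        = t⁻¹ • (((n:ℝ)+1) • (h (o + ((n:ℝ)+1)⁻¹ • (t • u)) - o))
      rw [harg n, smul_smul, hcoef n]
    have hcw : Tendsto (fun n => c n - w n) atTop (nhds 0) := by
      have hb2 : Tendsto (fun n => 2 * L * ε n) atTop (nhds 0) := by
        simpa using herr.const_mul (2 * L)
      refine squeeze_zero_norm' ?_ hb2
      · filter_upwards [hbound] with n hn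
        have hdiff : c n - w n = (s n)⁻¹ • (h (a n) - h (o + s n • u)) := by
          simp only [hcdef, hwdef, ← smul_sub]
          congr 1
          abel
        rw [hdiff, norm_smul, Real.norm_eq_abs, abs_of_pos (inv_pos.2 (hspos n))]
        have hlip := (hbl (a n) (o + s n • u)).2
        have harg : a n - (o + s n • u) = (a n - o) - s n • u := by abel
        rw [harg] at hlip
        calc (s n)⁻¹ * ‖h (a n) - h (o + s n • u)‖
            ≤ (s n)⁻¹ * (L * (2 * ε n * s n)) := by
              apply mul_le_mul_of_nonneg_left _ (inv_pos.2 (hspos n)).le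
              exact hlip.trans (mul_le_mul_of_nonneg_left hn hL.le)
          _ = 2 * L * ε n := by field_simp [(hspos n).ne']
    set v0 : EuclideanSpace ℝ (Fin d) := t⁻¹ • f (t • u) with hv0def
    have hw : Tendsto w (𝒰 : Filter ℕ) (nhds v0) := by
      have h1 : Tendsto (fun n => t⁻¹ • g n (t • u)) (𝒰 : Filter ℕ) (nhds v0) :=
        (hf (t • u)).const_smul t⁻¹
      refine h1.congr fun n => (hwg n).symm
    have hc : Tendsto c (𝒰 : Filter ℕ) (nhds v0) := by
      have h1 : Tendsto (fun n => (c n - w n) + w n) (𝒰 : Filter ℕ) (nhds (0 + v0)) :=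
        Tendsto.add (hcw.mono_left h𝒰) hw
      simpa using h1
    have hftu : (1/L) * t ≤ ‖f (t • u)‖ := by
      have := hflow (t • u) 0
      rw [hf0, sub_zero, sub_zero, norm_smul, Real.norm_eq_abs, abs_of_pos htpos,
        hunorm, mul_one] at this
      exact this
    have hv0norm : 1/L ≤ ‖v0‖ := by
      rw [hv0def, norm_smul, Real.norm_eq_abs, abs_of_pos (inv_pos.2 htpos)]
      calc 1/L = t⁻¹ * ((1/L) * t) := by field_simp
        _ ≤ t⁻¹ * ‖f (t • u)‖ := mul_le_mul_of_nonneg_left hftu (inv_pos.2 htpos).le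
    have hv0pos : 0 < ‖v0‖ := lt_of_lt_of_le (by positivity) hv0norm
    have hv0ne : v0 ≠ 0 := norm_pos_iff.1 hv0pos
    set v : EuclideanSpace ℝ (Fin d) := ‖v0‖⁻¹ • v0 with hvdef
    have hvnorm : ‖v‖ = 1 := by
      rw [hvdef, norm_smul, Real.norm_eq_abs, abs_of_pos (inv_pos.2 hv0pos),
        inv_mul_cancel₀ hv0pos.ne']
    have hfeq : f (t • u) = ‖f (t • u)‖ • v := by
      have h2 : f (t • u) = t • v0 := by
        rw [hv0def, smul_smul, mul_inv_cancel₀ htpos.ne', one_smul]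
      have h1 : ‖f (t • u)‖ = t * ‖v0‖ := by
        rw [h2, norm_smul, Real.norm_eq_abs, abs_of_pos htpos]
      rw [h1, hvdef, smul_smul, mul_assoc, mul_inv_cancel₀ hv0pos.ne', mul_one]
      exact h2
    refine ⟨v, ⟨hvnorm, ?_⟩, hfeq⟩
    -- construct the witnessing sequence in h '' A
    have hNc : Tendsto (fun n => ‖c n‖⁻¹ • c n) (𝒰 : Filter ℕ) (nhds v) := by
      have hcont : ContinuousAt (fun x : EuclideanSpace ℝ (Fin d) => ‖x‖⁻¹ • x) v0 := by
        exact (continuousAt_id.norm.inv₀ hv0pos.ne').smul continuousAt_id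
      exact hcont.tendsto.comp hc
    have hnormc : Tendsto (fun n => ‖c n‖) (𝒰 : Filter ℕ) (nhds ‖v0‖) := hc.norm
    have hceq : ∀ n, ‖h (a n) - o‖ = s n * ‖c n‖ := by
      intro n
      rw [hcdef]
      simp only
      rw [norm_smul, Real.norm_eq_abs, abs_of_pos (inv_pos.2 (hspos n))]
      field_simp [(hspos n).ne']
    have hato : Tendsto (fun n => ‖h (a n) - o‖) (𝒰 : Filter ℕ) (nhds 0) := by
      have h1 : Tendsto (fun n => s n * ‖c n‖) (𝒰 : Filter ℕ) (nhds (0 * ‖v0‖)) :=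
        Tendsto.mul (hs0.mono_left h𝒰) hnormc
      rw [zero_mul] at h1
      exact h1.congr fun n => (hceq n).symm
    have hSmem : ∀ k : ℕ, {n : ℕ | dist (‖c n‖⁻¹ • c n) v < 1/((k:ℝ)+1)
        ∧ ‖h (a n) - o‖ < 1/((k:ℝ)+1) ∧ h (a n) ≠ o} ∈ (𝒰 : Filter ℕ) := by
      intro k
      have hkpos : (0:ℝ) < 1/((k:ℝ)+1) := by positivity
      have e1 : ∀ᶠ n in (𝒰 : Filter ℕ), dist (‖c n‖⁻¹ • c n) v < 1/((k:ℝ)+1) :=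
        hNc (Metric.ball_mem_nhds v hkpos)
      have e2 : ∀ᶠ n in (𝒰 : Filter ℕ), ‖h (a n) - o‖ < 1/((k:ℝ)+1) := by
        have := hato (Metric.ball_mem_nhds (0:ℝ) hkpos)
        filter_upwards [this] with n hn
        simpa [Real.dist_eq, abs_of_nonneg (norm_nonneg _)] using hn
      have e3 : ∀ᶠ n in (𝒰 : Filter ℕ), h (a n) ≠ o := by
        have hgt : ∀ᶠ x in nhds ‖v0‖, (0:ℝ) < x := eventually_gt_nhds hv0pos
        filter_upwards [hnormc hgt] with n hn
        intro hcontra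
        simp only [Set.mem_preimage, Set.mem_setOf_eq] at hn
        have hzero : c n = 0 := by
          show (s n)⁻¹ • (h (a n) - o) = 0
          rw [hcontra, sub_self, smul_zero]
        rw [hzero, norm_zero] at hn
        exact lt_irrefl 0 hn
      filter_upwards [e1, e2, e3] with n h1 h2 h3
      exact ⟨h1, h2, h3⟩
    have hSne : ∀ k : ℕ, ∃ n : ℕ, dist (‖c n‖⁻¹ • c n) v < 1/((k:ℝ)+1)
        ∧ ‖h (a n) - o‖ < 1/((k:ℝ)+1) ∧ h (a n) ≠ o := by
      intro k
      exact Filter.nonempty_of_mem (hSmem k)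
    choose m hm1 hm2 hm3 using hSne
    set b : ℕ → EuclideanSpace ℝ (Fin d) := fun k => h (a (m k)) with hbdef
    refine ⟨b, fun k => ⟨a (m k), haA _, rfl⟩, hm3, ?_, ?_⟩
    · rw [tendsto_iff_norm_sub_tendsto_zero]
      apply squeeze_zero (fun k => norm_nonneg _) (fun k => (hm2 k).le)
      exact tendsto_one_div_add_atTop_nhds_zero_nat
    · have hbk : ∀ k, ‖b k - o‖⁻¹ • (b k - o) = ‖c (m k)‖⁻¹ • c (m k) := by
        intro k
        have : c (m k) = (s (m k))⁻¹ • (b k - o) := rfl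
        rw [this, normalize_smul_pos (inv_pos.2 (hspos (m k)))]
      rw [tendsto_iff_dist_tendsto_zero]
      apply squeeze_zero (fun k => dist_nonneg) (fun k => ?_) tendsto_one_div_add_atTop_nhds_zero_nat
      rw [hbk k]
      exact (hm1 k).le
  -- conclude
  have hsub : f '' cone A o ⊆ cone (h '' A) o := by
    rintro x ⟨y, ⟨t, ht, u, hu, rfl⟩, rfl⟩
    rcases eq_or_lt_of_le ht with rfl | htpos
    · obtain ⟨v, hv, -⟩ := claim u hu 1 one_pos
      exact ⟨0, le_rfl, v, hv, by rw [zero_smul, hf0, zero_smul]⟩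
    · obtain ⟨v, hv, hveq⟩ := claim u hu t htpos
      exact ⟨‖f (t • u)‖, norm_nonneg _, v, hv, hveq⟩
  calc dimH (cone A o) ≤ dimH (f '' cone A o) := hanti.le_dimH_image _
    _ ≤ dimH (cone (h '' A) o) := dimH_mono hsub

end
end
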